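/- arXiv:1512.09321 — 4 statements merged into one kernel-verified Lean document; each statement's English description precedes it below -/
import Mathlib

section
/- Let w ≤ -1 be an integer, let S be a combinatorial w-simple-minded system, and let s ∈ S. Then s has exactly |w| - 1 replacements, i.e. there are exactly |w| - 1 d-admissible arcs s* ≠ s such that (S \ {s}) ∪ {s*} is a combinatorial w-Hom configuration. -/
open Set

/-- An arc of the `∞`-gon: a pair of integers `(t, u)`, source `t`, target `u`. -/
abbrev Arc := ℤ × ℤ

/-- `(t,u)` is `d`-admissible for `d = w - 1`: `u - t ≤ w` and `u - t ≡ 1 (mod d)`. -/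
def IsAdmissible (w : ℤ) (a : Arc) : Prop :=
  a.2 - a.1 ≤ w ∧ (w - 1) ∣ (a.2 - a.1 - 1)

/-- `p` is an endpoint of the arc `a`. -/
def IsEndpoint (p : ℤ) (a : Arc) : Prop := p = a.1 ∨ p = a.2

/-- `b = (v,x)` is an overarc of `a = (t,u)` if `x < u < t < v`. -/
def OverarcOf (b a : Arc) : Prop := b.2 < a.2 ∧ a.2 < a.1 ∧ a.1 < b.1

/-- `b = (v,x)` is an overarc of the integer `p` if `x < p < v`. -/
def OverarcOfVertex (b : Arc) (p : ℤ) : Prop := b.2 < p ∧ p < b.1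

/-- Arcs `a` and `b` share an endpoint. -/
def SharesEndpoint (a b : Arc) : Prop :=
  a.1 = b.1 ∨ a.1 = b.2 ∨ a.2 = b.1 ∨ a.2 = b.2

/-- Arcs `a = (t,u)` and `b = (v,x)` strictly cross: `u < x < t < v` or `x < u < v < t`. -/
def StrictCross (a b : Arc) : Prop :=
  (a.2 < b.2 ∧ b.2 < a.1 ∧ a.1 < b.1) ∨ (b.2 < a.2 ∧ a.2 < b.1 ∧ b.1 < a.1)

/-- Two arcs cross if they share an endpoint or strictly cross. -/
def Cross (a b : Arc) : Prop := SharesEndpoint a b ∨ StrictCross a b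

/-- `p` is isolated with respect to `X` if it is an endpoint of no arc of `X`. -/
def Isolated (X : Set Arc) (p : ℤ) : Prop := ∀ a ∈ X, ¬ IsEndpoint p a

/-- `p` is an inner-isolated vertex of the arc `b` with respect to `X`: `p` is isolated,
`b` is an overarc of `p`, and no arc of `X` of which `b` is an overarc is an overarc of `p`. -/
def InnerIsolatedOf (X : Set Arc) (b : Arc) (p : ℤ) : Prop :=
  Isolated X p ∧ OverarcOfVertex b p ∧ ∀ c ∈ X, OverarcOf b c → ¬ OverarcOfVertex c p

/-- `p` is an outer-isolated vertex of `X`: isolated with no overarc in `X`. -/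
def OuterIsolated (X : Set Arc) (p : ℤ) : Prop :=
  Isolated X p ∧ ∀ b ∈ X, ¬ OverarcOfVertex b p

/-- A combinatorial `w`-Hom configuration: a set of `d`-admissible arcs (`d = w - 1`),
pairwise noncrossing, such that every arc has exactly `|w| - 1` inner-isolated vertices
and there are at most `|w|` outer-isolated vertices. -/
def IsHomConfig (w : ℤ) (S : Set Arc) : Prop :=
  (∀ a ∈ S, IsAdmissible w a) ∧
  (∀ a ∈ S, ∀ b ∈ S, a ≠ b → ¬ Cross a b) ∧
  (∀ a ∈ S, {p : ℤ | InnerIsolatedOf S a p}.encard = ((-w - 1).toNat : ℕ∞)) ∧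
  {p : ℤ | OuterIsolated S p}.encard ≤ ((-w).toNat : ℕ∞)

/-- A combinatorial `w`-Riedtmann configuration: a `w`-Hom configuration with at most
`|w| - 1` outer-isolated vertices. -/
def IsRiedtmann (w : ℤ) (S : Set Arc) : Prop :=
  IsHomConfig w S ∧ {p : ℤ | OuterIsolated S p}.encard ≤ ((-w - 1).toNat : ℕ∞)

/-- A combinatorial `w`-simple-minded system: a `w`-Riedtmann configuration in which
every arc has an overarc. -/
def IsSMS (w : ℤ) (S : Set Arc) : Prop :=
  IsRiedtmann w S ∧ ∀ a ∈ S, ∃ b ∈ S, OverarcOf b a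

/-- `t` is a replacement of `s` in the `w`-Hom configuration `S`. -/
def IsReplacement (w : ℤ) (S : Set Arc) (s t : Arc) : Prop :=
  t ≠ s ∧ IsHomConfig w ((S \ {s}) ∪ {t})

/-- `c` is a Ptolemy arc of class I associated to the strictly crossing arcs `a` and `b`:
one of the four arcs joining an endpoint of `a` to an endpoint of `b`. -/
def IsPtolemyI (a b c : Arc) : Prop :=
  StrictCross a b ∧ c.2 < c.1 ∧
    ((IsEndpoint c.1 a ∧ IsEndpoint c.2 b) ∨ (IsEndpoint c.1 b ∧ IsEndpoint c.2 a))

/-- `c` is a Ptolemy arc of class II associated to the neighbouring arcs `a` and `b`: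
the distance `1` is realised by endpoints `p` and `p - 1`, and `c` joins the endpoint of
`a` other than `p, p-1` to the endpoint of `b` other than `p, p-1`. -/
def IsPtolemyII (a b c : Arc) : Prop :=
  ¬ Cross a b ∧
  ∃ p e f : ℤ,
    (((IsEndpoint p a ∧ IsEndpoint (p - 1) b) ∧ (IsEndpoint e a ∧ e ≠ p) ∧
        (IsEndpoint f b ∧ f ≠ p - 1)) ∨
     ((IsEndpoint p b ∧ IsEndpoint (p - 1) a) ∧ (IsEndpoint e b ∧ e ≠ p) ∧
        (IsEndpoint f a ∧ f ≠ p - 1))) ∧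
    c = (max e f, min e f)

/-- `Y` is a set of `d`-admissible arcs closed under adjoining `d`-admissible Ptolemy arcs
of classes I and II. -/
def PtolemyClosed (w : ℤ) (Y : Set Arc) : Prop :=
  (∀ a ∈ Y, IsAdmissible w a) ∧
  ∀ a ∈ Y, ∀ b ∈ Y, ∀ c : Arc,
    (IsPtolemyI a b c ∨ IsPtolemyII a b c) → IsAdmissible w c → c ∈ Y

/-- The Ptolemy closure of `X`: the smallest set of `d`-admissible arcs containing `X`
and closed under adjoining `d`-admissible Ptolemy arcs of classes I and II. -/
def PtolemyClosure (w : ℤ) (X : Set Arc) : Set Arc :=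
  ⋂₀ {Y : Set Arc | X ⊆ Y ∧ PtolemyClosed w Y}

/-- `p` is a left fountain of `A`: infinitely many arcs of `A` have source `p`. -/
def LeftFountain (A : Set Arc) (p : ℤ) : Prop := {a ∈ A | a.1 = p}.Infinite

/-- `p` is a right fountain of `A`: infinitely many arcs of `A` have target `p`. -/
def RightFountain (A : Set Arc) (p : ℤ) : Prop := {a ∈ A | a.2 = p}.Infinite

/-- The set `X_S = { (t + j, u + j) : (t,u) ∈ S, 0 ≤ j ≤ |w| - 1 }`, corresponding to the
union of the shifted copies `Σ^i S` for `w + 1 ≤ i ≤ 0`. -/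
def ShiftFamily (w : ℤ) (S : Set Arc) : Set Arc :=
  {c : Arc | ∃ a ∈ S, ∃ j : ℤ, 0 ≤ j ∧ j ≤ -w - 1 ∧ c = (a.1 + j, a.2 + j)}

namespace Stmt1

lemma not_cross_trich {a b : Arc} (h : ¬ Cross a b) (ha : a.2 < a.1) (hb : b.2 < b.1) :
    a.1 < b.2 ∨ b.1 < a.2 ∨ OverarcOf a b ∨ OverarcOf b a := by
  simp only [Cross, SharesEndpoint, StrictCross, OverarcOf, not_or] at *
  omega

lemma cross_comm {a b : Arc} : Cross a b ↔ Cross b a := by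
  simp only [Cross, SharesEndpoint, StrictCross]; tauto

lemma iso_ne {X : Set Arc} {p : ℤ} (h : Isolated X p) {c : Arc} (hc : c ∈ X) :
    p ≠ c.1 ∧ p ≠ c.2 := by
  have := h c hc; unfold IsEndpoint at this; tauto

structure Ctx (w : ℤ) (S : Set Arc) (s b : Arc) : Prop where
  hw : w ≤ -1
  adm : ∀ a ∈ S, IsAdmissible w a
  nc : ∀ a ∈ S, ∀ a' ∈ S, a ≠ a' → ¬ Cross a a'
  inner : ∀ a ∈ S, {p : ℤ | InnerIsolatedOf S a p}.encard = ((-w - 1).toNat : ℕ∞)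
  outer : {p : ℤ | OuterIsolated S p}.encard ≤ ((-w).toNat : ℕ∞)
  hs : s ∈ S
  hb : b ∈ S
  hob : OverarcOf b s
  hmin : ∀ c ∈ S, OverarcOf b c → ¬ OverarcOf c s

def Qset (S : Set Arc) (s b : Arc) : Set ℤ := {p | InnerIsolatedOf (S \ {s}) b p}

variable {w : ℤ} {S : Set Arc} {s b t : Arc}

lemma Q_iso {p : ℤ} (hp : p ∈ Qset S s b) : Isolated (S \ {s}) p := hp.1
lemma Q_in {p : ℤ} (hp : p ∈ Qset S s b) : b.2 < p ∧ p < b.1 := hp.2.1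
lemma Q_third {p : ℤ} (hp : p ∈ Qset S s b) {c : Arc} (hc : c ∈ S \ {s})
    (hbc : OverarcOf b c) : ¬ OverarcOfVertex c p := hp.2.2 c hc hbc

lemma Ctx.lt2 (C : Ctx w S s b) {a : Arc} (ha : a ∈ S) : a.2 < a.1 := by
  have := (C.adm a ha).1; have := C.hw; omega

lemma Ctx.slt (C : Ctx w S s b) : s.2 < s.1 := C.lt2 C.hs
lemma Ctx.blt (C : Ctx w S s b) : b.2 < b.1 := C.lt2 C.hb

lemma Ctx.bns (C : Ctx w S s b) : b ≠ s := by
  obtain ⟨h1, h2, h3⟩ := C.hob; intro h; rw [h] at h3; omega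

lemma Ctx.bS' (C : Ctx w S s b) : b ∈ S \ {s} := ⟨C.hb, C.bns⟩

lemma Ctx.iso_endpoint_s (C : Ctx w S s b) {p : ℤ} (hp : IsEndpoint p s) :
    Isolated (S \ {s}) p := by
  intro a ha hpa
  refine C.nc s C.hs a ha.1 (fun h => ha.2 h.symm) (Or.inl ?_)
  unfold IsEndpoint at hp hpa; unfold SharesEndpoint; omega

lemma Ctx.trichS (C : Ctx w S s b) {a a' : Arc} (ha : a ∈ S) (ha' : a' ∈ S) (hne : a ≠ a') :
    a.1 < a'.2 ∨ a'.1 < a.2 ∨ OverarcOf a a' ∨ OverarcOf a' a :=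
  not_cross_trich (C.nc a ha a' ha' hne) (C.lt2 ha) (C.lt2 ha')

lemma Ctx.s1_mem (C : Ctx w S s b) : s.1 ∈ Qset S s b := by
  refine ⟨C.iso_endpoint_s (Or.inl rfl), ⟨?_, ?_⟩, ?_⟩
  · have h1 := C.hob; have h2 := C.slt; unfold OverarcOf at h1; omega
  · exact C.hob.2.2
  · intro c hc hbc hov
    have hne : s ≠ c := fun h => hc.2 h.symm
    rcases C.trichS C.hs hc.1 hne with h | h | h | h
    · unfold OverarcOfVertex at hov; omega
    · have := C.slt; unfold OverarcOfVertex at hov; omega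
    · unfold OverarcOf at h; unfold OverarcOfVertex at hov; omega
    · exact C.hmin c hc.1 hbc h

lemma Ctx.s2_mem (C : Ctx w S s b) : s.2 ∈ Qset S s b := by
  refine ⟨C.iso_endpoint_s (Or.inr rfl), ⟨?_, ?_⟩, ?_⟩
  · exact C.hob.1
  · have h1 := C.hob; have h2 := C.slt; unfold OverarcOf at h1; omega
  · intro c hc hbc hov
    have hne : s ≠ c := fun h => hc.2 h.symm
    rcases C.trichS C.hs hc.1 hne with h | h | h | h
    · have := C.slt; unfold OverarcOfVertex at hov; omega
    · unfold OverarcOfVertex at hov; omega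
    · unfold OverarcOf at h; unfold OverarcOfVertex at hov; have := C.lt2 hc.1; omega
    · exact C.hmin c hc.1 hbc h

lemma Ctx.gap (C : Ctx w S s b) {p p' : ℤ} (hp : p ∈ Qset S s b) (hp' : p' ∈ Qset S s b)
    (hlt : p < p') (hcons : ∀ x ∈ Qset S s b, ¬(p < x ∧ x < p')) :
    (1 - w) ∣ (p' - p - 1) := by
  have hbp := Q_in hp
  have hbp' := Q_in hp'
  suffices h : ∀ k : ℕ, ∀ x : ℤ, p' - x ≤ k → p ≤ x → x < p' →
      (1 - w) ∣ (x - p) →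
      (∀ c ∈ S \ {s}, OverarcOf b c → c.1 ≤ x ∨ x < c.2) →
      (1 - w) ∣ (p' - p - 1) by
    refine h (p' - p).toNat p (by omega) le_rfl hlt ⟨0, by ring⟩ ?_
    intro c hc hbc
    have h3 := Q_third hp hc hbc
    have hiso := iso_ne (Q_iso hp) hc
    have hc2 : c.2 < c.1 := C.lt2 hc.1
    unfold OverarcOfVertex at h3; omega
  intro k
  induction k with
  | zero => intro x h0 h1 h2 _ _; omega
  | succ k ih =>
    intro x hk hpx hxp hdvd hinv
    by_cases hy : x + 1 = p'
    · obtain ⟨u, hu⟩ := hdvd; exact ⟨u, by omega⟩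
    have hyQ : x + 1 ∉ Qset S s b := fun hmem => hcons _ hmem ⟨by omega, by omega⟩
    have hniso : ¬ Isolated (S \ {s}) (x + 1) := by
      intro hiso
      exact hyQ ⟨hiso, ⟨by omega, by omega⟩, fun c hc hbc hov => by
        rcases hinv c hc hbc with h | h <;> (unfold OverarcOfVertex at hov; omega)⟩
    unfold Isolated at hniso; push_neg at hniso
    obtain ⟨c, hc, hcy⟩ := hniso
    have hc2 : c.2 < c.1 := C.lt2 hc.1
    unfold IsEndpoint at hcy
    have hcb : OverarcOf b c := by
      have hneb : c ≠ b := by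
        rintro rfl; omega
      rcases C.trichS hc.1 C.hb hneb with h | h | h | h
      · omega
      · omega
      · unfold OverarcOf at h; omega
      · exact h
    have hy2 : x + 1 = c.2 := by
      rcases hinv c hc hcb with h | h <;> omega
    have hx'p' : c.1 < p' := by
      have h3 := Q_third hp' hc hcb
      have hisop' := iso_ne (Q_iso hp') hc
      unfold OverarcOfVertex at h3; omega
    have hdvd' : (1 - w) ∣ (c.1 - p) := by
      have h1 : (1 - w) ∣ (c.1 - c.2 + 1) := by
        obtain ⟨v, hv⟩ := (C.adm c hc.1).2
        exact ⟨v, by linear_combination -hv⟩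
      have heq : c.1 - p = (x - p) + (c.1 - c.2 + 1) := by omega
      rw [heq]; exact dvd_add hdvd h1
    have hinv' : ∀ c' ∈ S \ {s}, OverarcOf b c' → c'.1 ≤ c.1 ∨ c.1 < c'.2 := by
      intro c' hc' hbc'
      by_cases hcc : c' = c
      · subst hcc; left; exact le_rfl
      · have hc'2 : c'.2 < c'.1 := C.lt2 hc'.1
        rcases C.trichS hc.1 hc'.1 (fun h => hcc h.symm) with h | h | h | h
        · right; exact h
        · left; omega
        · unfold OverarcOf at h; left; omega
        · unfold OverarcOf at h
          rcases hinv c' hc' hbc' with h2 | h2 <;> omega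
    exact ih c.1 (by omega) (by omega) hx'p' hdvd' hinv'


def Tset (S : Set Arc) (s t : Arc) : Set Arc := (S \ {s}) ∪ {t}

lemma mem_Tset {a : Arc} : a ∈ Tset S s t ↔ a ∈ S \ {s} ∨ a = t := by
  simp only [Tset, mem_union, mem_singleton_iff]

structure TCtx (w : ℤ) (S : Set Arc) (s b t : Arc) extends Ctx w S s b : Prop where
  htS : t ∉ S \ {s}
  ht1 : t.1 ∈ Qset S s b
  ht2 : t.2 ∈ Qset S s b
  htlt : t.2 < t.1

lemma TCtx.obt (D : TCtx w S s b t) : OverarcOf b t :=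
  ⟨(Q_in D.ht2).1, D.htlt, (Q_in D.ht1).2⟩

lemma TCtx.nct (D : TCtx w S s b t) {a : Arc} (ha : a ∈ S \ {s}) : ¬ Cross t a := by
  have C := D.toCtx
  have ha2 := C.lt2 ha.1
  have ht1b := Q_in D.ht1
  have ht2b := Q_in D.ht2
  have htlt := D.htlt
  intro hcr
  have hnsh : ¬ SharesEndpoint t a := by
    have h1 := iso_ne (Q_iso D.ht1) ha
    have h2 := iso_ne (Q_iso D.ht2) ha
    unfold SharesEndpoint; omega
  have hsc : StrictCross t a := by
    rcases hcr with h | h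
    · exact absurd h hnsh
    · exact h
  by_cases hab : a = b
  · subst hab; unfold StrictCross at hsc; omega
  · rcases C.trichS ha.1 C.hb hab with h | h | h | h
    · unfold StrictCross at hsc; omega
    · unfold StrictCross at hsc; omega
    · unfold OverarcOf at h; unfold StrictCross at hsc; omega
    · have k1 := Q_third D.ht1 ha h
      have k2 := Q_third D.ht2 ha h
      unfold OverarcOf at h; unfold OverarcOfVertex at k1 k2
      unfold StrictCross at hsc; omega

lemma TCtx.ncT (D : TCtx w S s b t) :
    ∀ a ∈ Tset S s t, ∀ a' ∈ Tset S s t, a ≠ a' → ¬ Cross a a' := by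
  intro a ha a' ha' hne
  rcases mem_Tset.1 ha with h1 | rfl
  · rcases mem_Tset.1 ha' with h2 | rfl
    · exact D.toCtx.nc a h1.1 a' h2.1 hne
    · rw [cross_comm]; exact D.nct h1
  · rcases mem_Tset.1 ha' with h2 | h2
    · exact D.nct h2
    · exact absurd h2.symm hne

lemma TCtx.II_t (D : TCtx w S s b t) :
    {p : ℤ | InnerIsolatedOf (Tset S s t) t p} =
      {p : ℤ | p ∈ Qset S s b ∧ t.2 < p ∧ p < t.1} := by
  have C := D.toCtx
  ext p
  simp only [mem_setOf_eq]
  constructor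
  · rintro ⟨hiso, hov, hthird⟩
    have hov' : t.2 < p ∧ p < t.1 := hov
    have hisoS' : Isolated (S \ {s}) p := fun a ha => hiso a (Or.inl ha)
    refine ⟨⟨hisoS', ⟨?_, ?_⟩, ?_⟩, hov'⟩
    · have := Q_in D.ht2; omega
    · have := Q_in D.ht1; omega
    · intro c hc hbc hovc
      have hovc' : c.2 < p ∧ p < c.1 := hovc
      have hct : c ≠ t := fun h => D.htS (h ▸ hc)
      have hc2 := C.lt2 hc.1
      rcases not_cross_trich (D.nct hc) D.htlt hc2 with h | h | h | h
      · omega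
      · omega
      · exact hthird c (Or.inl hc) h hovc
      · have := Q_third D.ht2 hc hbc
        unfold OverarcOf at h; unfold OverarcOfVertex at this; omega
  · rintro ⟨hQ, h2, h1⟩
    refine ⟨?_, ⟨h2, h1⟩, ?_⟩
    · intro a ha
      rcases mem_Tset.1 ha with haa | rfl
      · exact Q_iso hQ a haa
      · unfold IsEndpoint; omega
    · intro c hc hct hovc
      rcases mem_Tset.1 hc with hcc | rfl
      · refine Q_third hQ hcc ?_ hovc
        have hbt := D.obt; unfold OverarcOf at hbt hct ⊢; omega
      · unfold OverarcOf at hct; omega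

lemma TCtx.II_b (D : TCtx w S s b t) :
    {p : ℤ | InnerIsolatedOf (Tset S s t) b p} =
      {p : ℤ | p ∈ Qset S s b ∧ (p < t.2 ∨ t.1 < p)} := by
  have C := D.toCtx
  ext p
  simp only [mem_setOf_eq]
  constructor
  · rintro ⟨hiso, hov, hthird⟩
    have hisoS' : Isolated (S \ {s}) p := fun a ha => hiso a (Or.inl ha)
    have hQ : p ∈ Qset S s b := ⟨hisoS', hov, fun c hc hbc => hthird c (Or.inl hc) hbc⟩
    have hnt := hthird t (Or.inr rfl) D.obt
    have hne := hiso t (Or.inr rfl)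
    unfold OverarcOfVertex at hnt
    unfold IsEndpoint at hne
    exact ⟨hQ, by omega⟩
  · rintro ⟨hQ, hpos⟩
    refine ⟨?_, Q_in hQ, ?_⟩
    · intro a ha
      rcases mem_Tset.1 ha with haa | rfl
      · exact Q_iso hQ a haa
      · unfold IsEndpoint; have := D.htlt; omega
    · intro c hc hbc hovc
      rcases mem_Tset.1 hc with hcc | rfl
      · exact Q_third hQ hcc hbc hovc
      · have hovc' : c.2 < p ∧ p < c.1 := hovc; omega

lemma TCtx.II_other (D : TCtx w S s b t) {a : Arc} (ha : a ∈ S \ {s}) (hab : a ≠ b) :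
    {p : ℤ | InnerIsolatedOf (Tset S s t) a p} = {p : ℤ | InnerIsolatedOf S a p} := by
  have C := D.toCtx
  have ha2 := C.lt2 ha.1
  have hblt := C.blt
  ext p
  simp only [mem_setOf_eq]
  constructor
  · rintro ⟨hiso, hov, hthird⟩
    have hov' : a.2 < p ∧ p < a.1 := hov
    have hisoS' : Isolated (S \ {s}) p := fun c hc => hiso c (Or.inl hc)
    have hkey : p ∉ Qset S s b := by
      intro hQ
      have hbp := Q_in hQ
      rcases C.trichS ha.1 C.hb hab with h | h | h | h
      · omega
      · omega
      · exact hthird b (Or.inl C.bS') h hbp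
      · exact Q_third hQ ha h hov
    have hps : ¬ IsEndpoint p s := by
      rintro (h | h)
      · exact hkey (by rw [h]; exact C.s1_mem)
      · exact hkey (by rw [h]; exact C.s2_mem)
    refine ⟨?_, hov, ?_⟩
    · intro c hc
      by_cases hcs : c = s
      · subst hcs; exact hps
      · exact hisoS' c ⟨hc, hcs⟩
    · intro c hc hac hovc
      by_cases hcs : c = s
      · rw [hcs] at hovc hac
        apply hkey
        have hovc' : s.2 < p ∧ p < s.1 := hovc
        have hob := C.hob
        unfold OverarcOf at hob
        refine ⟨hisoS', ⟨by omega, by omega⟩, ?_⟩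
        intro c' hc' hbc' hovc''
        have hovc''' : c'.2 < p ∧ p < c'.1 := hovc''
        have hc'2 := C.lt2 hc'.1
        have hslt := C.slt
        have hnecs : c' ≠ s := hc'.2
        rcases C.trichS hc'.1 C.hs hnecs with h | h | h | h
        · omega
        · omega
        · exact C.hmin c' hc'.1 hbc' h
        · refine hthird c' (Or.inl hc') ?_ hovc''
          unfold OverarcOf at h hac ⊢; omega
      · exact hthird c (Or.inl ⟨hc, hcs⟩) hac hovc
  · rintro ⟨hisoS, hov, hthird⟩
    have hov' : a.2 < p ∧ p < a.1 := hov
    have hkey : p ∉ Qset S s b := by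
      intro hQ
      have hbp := Q_in hQ
      rcases C.trichS ha.1 C.hb hab with h | h | h | h
      · omega
      · omega
      · exact hthird b C.hb h hbp
      · exact Q_third hQ ha h hov
    refine ⟨?_, hov, ?_⟩
    · intro c hc
      rcases mem_Tset.1 hc with hcc | rfl
      · exact hisoS c hcc.1
      · rintro (h | h)
        · exact hkey (by rw [h]; exact D.ht1)
        · exact hkey (by rw [h]; exact D.ht2)
    · intro c hc hac hovc
      rcases mem_Tset.1 hc with hcc | rfl
      · exact hthird c hcc.1 hac hovc
      · have hbt := D.obt
        have hovc' : c.2 < p ∧ p < c.1 := hovc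
        rcases C.trichS ha.1 C.hb hab with h | h | h | h
        · unfold OverarcOf at hac hbt; omega
        · unfold OverarcOf at hac hbt; omega
        · refine hthird b C.hb h ?_
          unfold OverarcOf at hbt
          exact ⟨by omega, by omega⟩
        · have := Q_third D.ht2 ha h
          unfold OverarcOf at hac; unfold OverarcOfVertex at this
          have := D.htlt; omega

lemma TCtx.OI (D : TCtx w S s b t) :
    {p : ℤ | OuterIsolated (Tset S s t) p} = {p : ℤ | OuterIsolated S p} := by
  have C := D.toCtx
  ext p
  simp only [mem_setOf_eq]
  constructor
  · rintro ⟨hiso, hno⟩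
    have hnob := hno b (Or.inl C.bS')
    have hps : ¬ IsEndpoint p s := by
      rintro (h | h)
      · exact hnob (by rw [h]; exact Q_in C.s1_mem)
      · exact hnob (by rw [h]; exact Q_in C.s2_mem)
    constructor
    · intro c hc
      by_cases hcs : c = s
      · subst hcs; exact hps
      · exact hiso c (Or.inl ⟨hc, hcs⟩)
    · intro c hc hovc
      by_cases hcs : c = s
      · subst hcs
        apply hnob
        have hovc' : c.2 < p ∧ p < c.1 := hovc
        have hob := C.hob; unfold OverarcOf at hob
        exact ⟨by omega, by omega⟩
      · exact hno c (Or.inl ⟨hc, hcs⟩) hovc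
  · rintro ⟨hiso, hno⟩
    have hnob := hno b C.hb
    constructor
    · intro c hc
      rcases mem_Tset.1 hc with hcc | rfl
      · exact hiso c hcc.1
      · rintro (h | h)
        · exact hnob (by rw [h]; exact Q_in D.ht1)
        · exact hnob (by rw [h]; exact Q_in D.ht2)
    · intro c hc hovc
      rcases mem_Tset.1 hc with hcc | rfl
      · exact hno c hcc.1 hovc
      · apply hnob
        have hovc' : c.2 < p ∧ p < c.1 := hovc
        have hbt := D.obt; unfold OverarcOf at hbt
        exact ⟨by omega, by omega⟩

lemma Tset_self (hs : s ∈ S) : Tset S s s = S := by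
  ext a
  simp only [Tset, mem_union, mem_diff, mem_singleton_iff]
  constructor
  · rintro (⟨h, _⟩ | rfl)
    · exact h
    · exact hs
  · intro h
    by_cases has : a = s
    · exact Or.inr has
    · exact Or.inl ⟨h, has⟩

lemma Ctx.sTCtx (C : Ctx w S s b) : TCtx w S s b s :=
  { toCtx := C, htS := by simp, ht1 := C.s1_mem, ht2 := C.s2_mem, htlt := C.slt }

lemma Ctx.II_s_eq (C : Ctx w S s b) :
    {p : ℤ | InnerIsolatedOf S s p} = {p : ℤ | p ∈ Qset S s b ∧ s.2 < p ∧ p < s.1} := by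
  have := C.sTCtx.II_t; rwa [Tset_self C.hs] at this

lemma Ctx.II_bS_eq (C : Ctx w S s b) :
    {p : ℤ | InnerIsolatedOf S b p} = {p : ℤ | p ∈ Qset S s b ∧ (p < s.2 ∨ s.1 < p)} := by
  have := C.sTCtx.II_b; rwa [Tset_self C.hs] at this

lemma Ctx.Qcard (C : Ctx w S s b) :
    (Qset S s b).encard = ((2 * (-w).toNat : ℕ) : ℕ∞) := by
  classical
  have hA := C.inner s C.hs
  have hB := C.inner b C.hb
  rw [C.II_s_eq] at hA
  rw [C.II_bS_eq] at hB
  have hslt := C.slt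
  have hsplit : Qset S s b =
      ({p : ℤ | p ∈ Qset S s b ∧ s.2 < p ∧ p < s.1} ∪
       {p : ℤ | p ∈ Qset S s b ∧ (p < s.2 ∨ s.1 < p)}) ∪ {s.1, s.2} := by
    ext p
    simp only [mem_union, mem_setOf_eq, mem_insert_iff, mem_singleton_iff]
    constructor
    · intro hp
      by_cases h1 : p = s.1
      · exact Or.inr (Or.inl h1)
      by_cases h2 : p = s.2
      · exact Or.inr (Or.inr h2)
      by_cases h3 : s.2 < p ∧ p < s.1
      · exact Or.inl (Or.inl ⟨hp, h3⟩)
      · exact Or.inl (Or.inr ⟨hp, by omega⟩)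
    · rintro ((⟨h, _⟩ | ⟨h, _⟩) | h | h)
      · exact h
      · exact h
      · rw [h]; exact C.s1_mem
      · rw [h]; exact C.s2_mem
  have d1 : Disjoint {p : ℤ | p ∈ Qset S s b ∧ s.2 < p ∧ p < s.1}
      {p : ℤ | p ∈ Qset S s b ∧ (p < s.2 ∨ s.1 < p)} := by
    rw [Set.disjoint_left]; rintro p ⟨_, h1⟩ ⟨_, h2⟩; omega
  have d2 : Disjoint ({p : ℤ | p ∈ Qset S s b ∧ s.2 < p ∧ p < s.1} ∪
      {p : ℤ | p ∈ Qset S s b ∧ (p < s.2 ∨ s.1 < p)}) ({s.1, s.2} : Set ℤ) := by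
    rw [Set.disjoint_left]
    rintro p (⟨_, h1⟩ | ⟨_, h1⟩) h2 <;>
      (simp only [mem_insert_iff, mem_singleton_iff] at h2; omega)
  rw [hsplit, Set.encard_union_eq d2, Set.encard_union_eq d1, hA, hB,
    Set.encard_pair (show s.1 ≠ s.2 by omega)]
  have hw := C.hw
  have harith : (2 * (-w).toNat : ℕ) = (-w - 1).toNat + ((-w - 1).toNat + 2) := by omega
  rw [harith]; push_cast; ring


structure Enum (w : ℤ) (S : Set Arc) (s b : Arc) (q : ℕ → ℤ) : Prop where
  hmem : ∀ l, l < 2 * (-w).toNat → q l ∈ Qset S s b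
  hmono : ∀ l l', l < l' → l' < 2 * (-w).toNat → q l < q l'
  hsurj : ∀ p ∈ Qset S s b, ∃ l, l < 2 * (-w).toNat ∧ q l = p

variable {q : ℕ → ℤ}

lemma Enum.inj (E : Enum w S s b q) {l l' : ℕ} (hl : l < 2 * (-w).toNat)
    (hl' : l' < 2 * (-w).toNat) (h : q l = q l') : l = l' := by
  rcases lt_trichotomy l l' with hh | hh | hh
  · have := E.hmono l l' hh hl'; omega
  · exact hh
  · have := E.hmono l' l hh hl; omega

lemma Enum.reflect (E : Enum w S s b q) {l l' : ℕ} (hl : l < 2 * (-w).toNat)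
    (hl' : l' < 2 * (-w).toNat) (h : q l < q l') : l < l' := by
  rcases lt_trichotomy l l' with hh | hh | hh
  · exact hh
  · subst hh; omega
  · have := E.hmono l' l hh hl; omega

lemma Enum.between (E : Enum w S s b q) {i j : ℕ} (hij : i < j) (hj : j < 2 * (-w).toNat) :
    {p : ℤ | p ∈ Qset S s b ∧ q i < p ∧ p < q j} = q '' (Set.Ioo i j) := by
  ext p
  simp only [mem_setOf_eq, mem_image, mem_Ioo]
  constructor
  · rintro ⟨hp, h1, h2⟩
    obtain ⟨l, hl, rfl⟩ := E.hsurj p hp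
    exact ⟨l, ⟨E.reflect (by omega) hl h1, E.reflect hl hj h2⟩, rfl⟩
  · rintro ⟨l, ⟨h1, h2⟩, rfl⟩
    exact ⟨E.hmem l (by omega), E.hmono i l h1 (by omega), E.hmono l j h2 hj⟩

lemma Enum.outside (E : Enum w S s b q) {i j : ℕ} (hij : i < j) (hj : j < 2 * (-w).toNat) :
    {p : ℤ | p ∈ Qset S s b ∧ (p < q i ∨ q j < p)} =
      q '' (Set.Iio i ∪ Set.Ioo j (2 * (-w).toNat)) := by
  ext p
  simp only [mem_setOf_eq, mem_image, mem_union, mem_Iio, mem_Ioo]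
  constructor
  · rintro ⟨hp, h1 | h1⟩
    · obtain ⟨l, hl, rfl⟩ := E.hsurj p hp
      exact ⟨l, Or.inl (E.reflect hl (by omega) h1), rfl⟩
    · obtain ⟨l, hl, rfl⟩ := E.hsurj p hp
      exact ⟨l, Or.inr ⟨E.reflect hj hl h1, hl⟩, rfl⟩
  · rintro ⟨l, h1 | ⟨h1, h2⟩, rfl⟩
    · exact ⟨E.hmem l (by omega), Or.inl (E.hmono l i h1 (by omega))⟩
    · exact ⟨E.hmem l h2, Or.inr (E.hmono j l h1 h2)⟩

lemma Enum.injOn (E : Enum w S s b q) {A : Set ℕ} (hA : A ⊆ Set.Iio (2 * (-w).toNat)) :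
    Set.InjOn q A := by
  intro l hl l' hl' h
  exact E.inj (hA hl) (hA hl') h

lemma Enum.encard_between (E : Enum w S s b q) {i j : ℕ} (hij : i < j)
    (hj : j < 2 * (-w).toNat) :
    {p : ℤ | p ∈ Qset S s b ∧ q i < p ∧ p < q j}.encard = ((j - i - 1 : ℕ) : ℕ∞) := by
  rw [E.between hij hj, Set.InjOn.encard_image (E.injOn (by intro x hx; simp at hx ⊢; omega)),
    ← Finset.coe_Ioo, Set.encard_coe_eq_coe_finsetCard, Nat.card_Ioo]

lemma Enum.encard_outside (E : Enum w S s b q) {i j : ℕ} (hij : i < j)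
    (hj : j < 2 * (-w).toNat) :
    {p : ℤ | p ∈ Qset S s b ∧ (p < q i ∨ q j < p)}.encard =
      ((i + (2 * (-w).toNat - j - 1) : ℕ) : ℕ∞) := by
  rw [E.outside hij hj, Set.InjOn.encard_image (E.injOn (by intro x hx; simp at hx ⊢; omega))]
  rw [Set.encard_union_eq (by rw [Set.disjoint_left]; intro x hx hx'; simp at hx hx'; omega)]
  rw [← Finset.coe_Iio, ← Finset.coe_Ioo, Set.encard_coe_eq_coe_finsetCard,
    Set.encard_coe_eq_coe_finsetCard, Nat.card_Iio, Nat.card_Ioo]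
  push_cast
  ring

lemma Enum.tele (E : Enum w S s b q) (C : Ctx w S s b) (i j : ℕ) (hij : i ≤ j)
    (hj : j < 2 * (-w).toNat) :
    ((j - i : ℕ) : ℤ) ≤ q j - q i ∧ (1 - w) ∣ (q j - q i - ((j - i : ℕ) : ℤ)) := by
  induction j, hij using Nat.le_induction with
  | base => simp
  | succ j hij ih =>
    have hjlt : j < 2 * (-w).toNat := by omega
    obtain ⟨ih1, ih2⟩ := ih hjlt
    have hstep : q j < q (j + 1) := E.hmono j (j + 1) (by omega) hj
    have hgap : (1 - w) ∣ (q (j + 1) - q j - 1) := by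
      refine C.gap (E.hmem j hjlt) (E.hmem (j + 1) hj) hstep ?_
      intro x hx ⟨hx1, hx2⟩
      obtain ⟨l, hl, rfl⟩ := E.hsurj x hx
      have := E.reflect hjlt hl hx1
      have := E.reflect hl hj hx2
      omega
    constructor
    · have hc1 : ((j + 1 - i : ℕ) : ℤ) = ((j - i : ℕ) : ℤ) + 1 := by omega
      omega
    · have heq : q (j + 1) - q i - ((j + 1 - i : ℕ) : ℤ) =
        (q (j + 1) - q j - 1) + (q j - q i - ((j - i : ℕ) : ℤ)) := by omega
      rw [heq]
      exact dvd_add hgap ih2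

lemma TCtx.idx (D : TCtx w S s b t) (E : Enum w S s b q)
    (hcnt : {p : ℤ | InnerIsolatedOf (Tset S s t) t p}.encard = ((-w - 1).toNat : ℕ∞)) :
    ∃ i, i < (-w).toNat ∧ q i = t.2 ∧ q (i + (-w).toNat) = t.1 := by
  have hw := D.toCtx.hw
  obtain ⟨i, hi, hqi⟩ := E.hsurj t.2 D.ht2
  obtain ⟨j, hj, hqj⟩ := E.hsurj t.1 D.ht1
  have hij : i < j := E.reflect hi hj (by rw [hqi, hqj]; exact D.htlt)
  rw [D.II_t, ← hqi, ← hqj, E.encard_between hij hj] at hcnt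
  have hcnt' : (j - i - 1 : ℕ) = (-w - 1).toNat := by exact_mod_cast hcnt
  have hjim : j = i + (-w).toNat := by omega
  exact ⟨i, by omega, hqi, by rw [← hjim]; exact hqj⟩

lemma forward (C : Ctx w S s b) (E : Enum w S s b q) {i : ℕ} (hi : i < (-w).toNat)
    {t : Arc} (ht1 : t.1 = q (i + (-w).toNat)) (ht2 : t.2 = q i) (hne : t ≠ s) :
    IsReplacement w S s t := by
  have hw := C.hw
  have hm1 : 1 ≤ (-w).toNat := by omega
  have hj : i + (-w).toNat < 2 * (-w).toNat := by omega
  have hilt : i < i + (-w).toNat := by omega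
  have hti : q i ∈ Qset S s b := E.hmem i (by omega)
  have htj : q (i + (-w).toNat) ∈ Qset S s b := E.hmem _ hj
  have htlt : t.2 < t.1 := by rw [ht1, ht2]; exact E.hmono i (i + (-w).toNat) hilt hj
  have htS : t ∉ S \ {s} := fun h => (Q_iso hti) t h (Or.inr ht2.symm)
  have D : TCtx w S s b t :=
    ⟨C, htS, by rw [ht1]; exact htj, by rw [ht2]; exact hti, htlt⟩
  have hadm : IsAdmissible w t := by
    obtain ⟨hgrow, hdvd⟩ := E.tele C i (i + (-w).toNat) (by omega) hj
    have hc : ((i + (-w).toNat - i : ℕ) : ℤ) = -w := by omega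
    rw [hc] at hgrow hdvd
    constructor
    · rw [ht1, ht2]; omega
    · rw [ht1, ht2]
      obtain ⟨v, hv⟩ := hdvd
      exact ⟨v + 1, by linear_combination -hv⟩
  refine ⟨hne, ?_⟩
  show IsHomConfig w (Tset S s t)
  refine ⟨?_, D.ncT, ?_, ?_⟩
  · intro a ha
    rcases mem_Tset.1 ha with h | rfl
    · exact C.adm a h.1
    · exact hadm
  · intro a ha
    rcases mem_Tset.1 ha with h | rfl
    · by_cases hab : a = b
      · subst hab
        rw [D.II_b, ht2, ht1, E.encard_outside hilt hj]
        have harith : (i + (2 * (-w).toNat - (i + (-w).toNat) - 1) : ℕ) = (-w - 1).toNat := by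
          omega
        rw [harith]
      · rw [D.II_other h hab]
        exact C.inner a h.1
    · rw [D.II_t, ht2, ht1, E.encard_between hilt hj]
      have harith : (i + (-w).toNat - i - 1 : ℕ) = (-w - 1).toNat := by omega
      rw [harith]
  · rw [D.OI]
    exact C.outer

lemma backward (C : Ctx w S s b) (E : Enum w S s b q) {t : Arc}
    (hrep : IsReplacement w S s t) :
    ∃ i, i < (-w).toNat ∧ t = (q (i + (-w).toNat), q i) := by
  have hw := C.hw
  have hm1 : 1 ≤ (-w).toNat := by omega
  obtain ⟨hts, hhom⟩ := hrep
  obtain ⟨hadm, hnc, hcnt, hout⟩ := hhom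
  have htT : t ∈ (S \ {s}) ∪ {t} := Or.inr rfl
  have hbT : b ∈ (S \ {s}) ∪ {t} := Or.inl C.bS'
  have ht2 : t.2 < t.1 := by have h1 := (hadm t htT).1; omega
  have htS : t ∉ S \ {s} := by
    intro hmem
    have hTeq : (S \ {s}) ∪ {t} = S \ {s} := by
      apply Set.union_eq_self_of_subset_right
      simpa using hmem
    have hcb := hcnt b hbT
    rw [hTeq] at hcb
    have hq : (Qset S s b).encard = ((-w - 1).toNat : ℕ∞) := hcb
    rw [C.Qcard] at hq
    have hq' : (2 * (-w).toNat : ℕ) = (-w - 1).toNat := by exact_mod_cast hq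
    omega
  have htne : t ≠ b := fun h => htS (h ▸ C.bS')
  have hQb : ∀ (_ : ∀ p ∈ Qset S s b,
      ¬ IsEndpoint p t ∧ (OverarcOf b t → ¬ OverarcOfVertex t p)), False := by
    intro H
    have hsub : Qset S s b ⊆ {p : ℤ | InnerIsolatedOf ((S \ {s}) ∪ {t}) b p} := by
      intro p hp
      refine ⟨?_, Q_in hp, ?_⟩
      · intro c hc
        rcases hc with hc | hc
        · exact Q_iso hp c hc
        · rw [hc]; exact (H p hp).1
      · intro c hc hbc hov
        rcases hc with hc | hc
        · exact Q_third hp hc hbc hov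
        · rw [hc] at hbc hov; exact (H p hp).2 hbc hov
    have hle := Set.encard_le_encard hsub
    rw [C.Qcard, hcnt b hbT] at hle
    have hle' : (2 * (-w).toNat : ℕ) ≤ ((-w - 1).toNat : ℕ) := by exact_mod_cast hle
    omega
  have hnctb : ¬ Cross t b := hnc t htT b hbT htne
  have hobt : OverarcOf b t := by
    have hblt := C.blt
    rcases not_cross_trich hnctb ht2 hblt with h | h | h | h
    · exfalso
      apply hQb
      intro p hp
      have hpin := Q_in hp
      constructor
      · unfold IsEndpoint; omega
      · intro hbt _; unfold OverarcOf at hbt; omega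
    · exfalso
      apply hQb
      intro p hp
      have hpin := Q_in hp
      constructor
      · unfold IsEndpoint; omega
      · intro hbt _; unfold OverarcOf at hbt; omega
    · exfalso
      apply hQb
      intro p hp
      have hpin := Q_in hp
      unfold OverarcOf at h
      constructor
      · unfold IsEndpoint; omega
      · intro hbt _; unfold OverarcOf at hbt; omega
    · exact h
  have hnobet : ∀ c ∈ S \ {s}, OverarcOf b c → ¬ OverarcOf c t := by
    intro c hc hbc hct
    apply hQb
    intro p hp
    have hQ3 := Q_third hp hc hbc
    unfold OverarcOfVertex at hQ3
    unfold OverarcOf at hct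
    constructor
    · unfold IsEndpoint; omega
    · intro _ hov
      have hov' : t.2 < p ∧ p < t.1 := hov
      exact hQ3 ⟨by omega, by omega⟩
  have hiso : ∀ x, IsEndpoint x t → Isolated (S \ {s}) x := by
    intro x hx a ha hend
    refine hnc t htT a (Or.inl ha) (fun h => htS (h ▸ ha)) (Or.inl ?_)
    unfold IsEndpoint at hx hend; unfold SharesEndpoint; omega
  have hepQ : ∀ c ∈ S \ {s}, OverarcOf b c →
      ∀ x, IsEndpoint x t → ¬ OverarcOfVertex c x := by
    intro c hc hbc x hx hov
    have hc2 := C.lt2 hc.1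
    have hnct : ¬ Cross t c := hnc t htT c (Or.inl hc) (fun h => htS (h ▸ hc))
    have hov' : c.2 < x ∧ x < c.1 := hov
    rcases not_cross_trich hnct ht2 hc2 with h | h | h | h
    · unfold IsEndpoint at hx; omega
    · unfold IsEndpoint at hx; omega
    · unfold OverarcOf at h; unfold IsEndpoint at hx; omega
    · exact hnobet c hc hbc h
  have ht1Q : t.1 ∈ Qset S s b := by
    refine ⟨hiso t.1 (Or.inl rfl), ⟨?_, ?_⟩, ?_⟩
    · have h := hobt; unfold OverarcOf at h; omega
    · exact hobt.2.2
    · intro c hc hbc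
      exact hepQ c hc hbc t.1 (Or.inl rfl)
  have ht2Q : t.2 ∈ Qset S s b := by
    refine ⟨hiso t.2 (Or.inr rfl), ⟨?_, ?_⟩, ?_⟩
    · exact hobt.1
    · have h := hobt; unfold OverarcOf at h; omega
    · intro c hc hbc
      exact hepQ c hc hbc t.2 (Or.inr rfl)
  have D : TCtx w S s b t := ⟨C, htS, ht1Q, ht2Q, ht2⟩
  obtain ⟨i, hi, hqi2, hqi1⟩ := D.idx E (hcnt t htT)
  refine ⟨i, hi, ?_⟩
  rw [Prod.ext_iff]
  exact ⟨hqi1.symm, hqi2.symm⟩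

end Stmt1

open Stmt1

/-- in a combinatorial `w`-simple-minded system (`w ≤ -1`), every arc has
exactly `|w| - 1` replacements. -/
theorem stmt_1 (w : ℤ) (hw : w ≤ -1) (S : Set Arc) (hS : IsSMS w S) (s : Arc) (hs : s ∈ S) :
    {t : Arc | IsReplacement w S s t}.encard = ((-w - 1).toNat : ℕ∞) := by
  classical
  obtain ⟨⟨⟨hadm, hnc, hinner, houter⟩, houter'⟩, hov⟩ := hS
  obtain ⟨b0, hb0S, hb0⟩ := hov s hs
  obtain ⟨v, ⟨b, hbS, hob, hbv⟩, hleast⟩ :=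
    Int.exists_least_of_bdd (P := fun v => ∃ c, c ∈ S ∧ OverarcOf c s ∧ c.1 = v)
      ⟨s.1, by rintro z ⟨c, -, hc, rfl⟩; exact le_of_lt hc.2.2⟩
      ⟨b0.1, b0, hb0S, hb0, rfl⟩
  have hmin : ∀ c ∈ S, OverarcOf b c → ¬ OverarcOf c s := by
    intro c hc hbc hcs
    have hle := hleast c.1 ⟨c, hc, hcs, rfl⟩
    have h1 : c.1 < b.1 := hbc.2.2
    omega
  have C : Ctx w S s b := ⟨hw, hadm, hnc, hinner, houter, hs, hbS, hob, hmin⟩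
  have hQfin : (Qset S s b).Finite := Set.finite_of_encard_eq_coe C.Qcard
  have hcard : hQfin.toFinset.card = 2 * (-w).toNat := by
    have h1 := hQfin.encard_eq_coe_toFinset_card
    rw [C.Qcard] at h1
    exact_mod_cast h1.symm
  set e := hQfin.toFinset.orderIsoOfFin hcard with he
  set q : ℕ → ℤ := fun l => if h : l < 2 * (-w).toNat then (e ⟨l, h⟩ : ℤ) else 0 with hqdef
  have hqeq : ∀ l (h : l < 2 * (-w).toNat), q l = (e ⟨l, h⟩ : ℤ) := by
    intro l h
    simp only [hqdef]
    rw [dif_pos h]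
  have E : Enum w S s b q := by
    constructor
    · intro l hl
      rw [hqeq l hl]
      have h2 := (e ⟨l, hl⟩).2
      rwa [Set.Finite.mem_toFinset] at h2
    · intro l l' hll hl'
      rw [hqeq l (by omega), hqeq l' hl']
      exact Subtype.coe_lt_coe.mpr (e.lt_iff_lt.mpr (Fin.mk_lt_mk.mpr hll))
    · intro p hp
      obtain ⟨l, hl⟩ := e.surjective ⟨p, by rwa [Set.Finite.mem_toFinset]⟩
      refine ⟨l.1, l.2, ?_⟩
      rw [hqeq l.1 l.2]
      exact congrArg Subtype.val hl
  obtain ⟨i0, hi0, hq0s2, hq0s1⟩ := C.sTCtx.idx E (by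
    rw [Tset_self hs]; exact hinner s hs)
  have hseq : s = ((q (i0 + (-w).toNat), q i0) : Arc) := by
    rw [Prod.ext_iff]; exact ⟨hq0s1.symm, hq0s2.symm⟩
  have hset : {t : Arc | IsReplacement w S s t} =
      (fun i : ℕ => ((q (i + (-w).toNat), q i) : Arc)) '' (Set.Iio ((-w).toNat) \ {i0}) := by
    ext t
    simp only [Set.mem_setOf_eq, Set.mem_image, Set.mem_diff, Set.mem_Iio,
      Set.mem_singleton_iff]
    constructor
    · intro hrep
      obtain ⟨i, hi, hti⟩ := backward C E hrep
      refine ⟨i, ⟨hi, ?_⟩, hti.symm⟩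
      rintro rfl
      exact hrep.1 (by rw [hti, ← hseq])
    · rintro ⟨i, ⟨hi, hne⟩, rfl⟩
      refine forward C E hi rfl rfl ?_
      intro h
      apply hne
      have h2 : q i = q i0 := by
        have h3 := congrArg Prod.snd h
        exact h3.trans hq0s2.symm
      have hw1 : 1 ≤ (-w).toNat := by omega
      exact E.inj (by omega) (by omega) h2
  rw [hset]
  rw [Set.InjOn.encard_image (by
    intro x hx y hy hxy
    have h2 : q x = q y := congrArg Prod.snd hxy
    have hw1 : 1 ≤ (-w).toNat := by omega
    simp only [Set.mem_diff, Set.mem_Iio] at hx hy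
    exact E.inj (by omega) (by omega) h2)]
  rw [Set.encard_diff_singleton_of_mem (Set.mem_Iio.mpr hi0)]
  rw [show Set.Iio ((-w).toNat) = (↑(Finset.Iio ((-w).toNat)) : Set ℕ) from
    (Finset.coe_Iio _).symm]
  rw [Set.encard_coe_eq_coe_finsetCard, Nat.card_Iio]
  have harith : ((-w).toNat - 1 : ℕ) = (-w - 1).toNat := by omega
  rw [← harith]
  norm_cast
end

section
/- Let w ≤ -1 be an integer, let S be a combinatorial w-Riedtmann configuration with exactly |w| - 1 outer-isolated vertices, and let s ∈ S. Then s has exactly |w| - 1 replacements. -/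
open Set

/-!
Let `n = |w| - 1` and `X = S \ {s}`. The regions cut out by `X` are its outside and the insides
of its arcs; the gaps of a region are the isolated vertices lying directly in it (the
outer-isolated vertices, resp. the inner-isolated vertices of the arc). Every region of `S` has
`n` gaps. The endpoints of `s` are gaps of a single region `o` of `X`, which therefore has
`2n + 2` gaps, while every other region of `X` keeps its `n` gaps.

An arc `c` makes `X ∪ {c}` a `w`-Hom configuration exactly when it joins two gaps of `o` with
`n` gaps of `o` between them: then `c` has `n` inner-isolated vertices and `o` keeps `n` gaps,
and `c` is admissible because the vertices under `c` that are not gaps fill the closed spans of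
admissible arcs, whose sizes are multiples of `w - 1`. No other region can host `c`, as it would
need `n + 2` gaps. Listing the gaps of `o` as `q₀ < ⋯ < q_{2n+1}`, the possible arcs are the
`n + 1` arcs `(q_{i+n+1}, q_i)`, one of which is `s`.
-/

section Nesting

variable {X : Set Arc} {a b c : Arc} {p : ℤ}

lemma Cross.symm (h : Cross a b) : Cross b a := by
  unfold Cross SharesEndpoint StrictCross at *
  omega

lemma overarcOf_or_overarcOf_of_not_cross (h : ¬ Cross a b) (ha : OverarcOfVertex a p)
    (hb : OverarcOfVertex b p) : OverarcOf a b ∨ OverarcOf b a := by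
  unfold Cross SharesEndpoint StrictCross at h
  unfold OverarcOfVertex at ha hb
  unfold OverarcOf
  omega

lemma overarcOf_of_not_cross_of_isEndpoint (h : ¬ Cross c a) (ha : a.2 < a.1)
    (hpa : IsEndpoint p a) (hcp : OverarcOfVertex c p) : OverarcOf c a := by
  unfold Cross SharesEndpoint StrictCross at h
  unfold IsEndpoint at hpa
  unfold OverarcOfVertex at hcp
  unfold OverarcOf
  omega

lemma overarcOf_of_not_cross_of_overarcOfVertex (h : ¬ Cross c a) (hc : c.2 < c.1)
    (hpc : IsEndpoint p c) (hap : OverarcOfVertex a p) : OverarcOf a c := by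
  unfold Cross SharesEndpoint StrictCross at h
  unfold IsEndpoint at hpc
  unfold OverarcOfVertex at hap
  unfold OverarcOf
  omega

lemma IsAdmissible.snd_lt_fst {w : ℤ} (hw : w ≤ -1) (h : IsAdmissible w a) : a.2 < a.1 := by
  have := h.1
  omega

lemma pairwise_not_cross_union_singleton (hnc : X.Pairwise fun a b => ¬ Cross a b)
    (hcX : ∀ a ∈ X, ¬ Cross c a) : (X ∪ {c}).Pairwise fun a b => ¬ Cross a b := by
  rintro a (ha | rfl) b (hb | rfl) hab
  · exact hnc ha hb hab
  · exact fun h => hcX a ha h.symm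
  · exact hcX b hb
  · exact absurd rfl hab

lemma isolated_of_not_cross (h : ∀ a ∈ X, ¬ Cross c a) (hpc : IsEndpoint p c) :
    Isolated X p := by
  intro a ha hpa
  apply h a ha (Or.inl _)
  unfold SharesEndpoint
  unfold IsEndpoint at hpa hpc
  omega

lemma exists_minimal_overarcOfVertex (ha : a ∈ X) (hap : OverarcOfVertex a p) :
    ∃ m ∈ X, OverarcOfVertex m p ∧ ∀ c ∈ X, OverarcOf m c → ¬ OverarcOfVertex c p := by
  obtain ⟨m, ⟨hm, hmp⟩, hmin⟩ := (measure fun a : Arc => (a.1 - a.2).toNat).wf.has_min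
    {a | a ∈ X ∧ OverarcOfVertex a p} ⟨a, ha, hap⟩
  refine ⟨m, hm, hmp, fun c hc hmc hcp => hmin c ⟨hc, hcp⟩ ?_⟩
  unfold OverarcOf at hmc
  change (c.1 - c.2).toNat < (m.1 - m.2).toNat
  omega

end Nesting

/-- A region is encoded as an `Option Arc`: `none` is the outside of all arcs, `some b` the
inside of the arc `b`. -/
def Encloses : Option Arc → Arc → Prop
  | none, _ => True
  | some b, a => OverarcOf b a

def EnclosesVertex : Option Arc → ℤ → Prop
  | none, _ => True
  | some b, p => OverarcOfVertex b p

def IsGap (X : Set Arc) (o : Option Arc) (p : ℤ) : Prop :=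
  Isolated X p ∧ EnclosesVertex o p ∧ ∀ a ∈ X, Encloses o a → ¬ OverarcOfVertex a p

section Regions

variable {X : Set Arc} {o o' : Option Arc} {a c : Arc} {p : ℤ}

lemma isGap_none : IsGap X none p ↔ OuterIsolated X p := by
  simp [IsGap, OuterIsolated, Encloses, EnclosesVertex]

lemma isGap_union_singleton_iff :
    IsGap (X ∪ {c}) o p ↔
      IsGap X o p ∧ ¬ IsEndpoint p c ∧ (Encloses o c → ¬ OverarcOfVertex c p) := by
  constructor
  · rintro ⟨hiso, hop, hmin⟩
    exact ⟨⟨fun a ha => hiso a (Or.inl ha), hop, fun a ha => hmin a (Or.inl ha)⟩,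
      hiso c (Or.inr rfl), hmin c (Or.inr rfl)⟩
  · rintro ⟨⟨hiso, hop, hmin⟩, hpc, hcp⟩
    refine ⟨?_, hop, ?_⟩
    · rintro a (ha | rfl)
      exacts [hiso a ha, hpc]
    · rintro a (ha | rfl)
      exacts [hmin a ha, hcp]

lemma enclosesVertex_of_encloses (hc : Encloses o c) (hcp : OverarcOfVertex c p) :
    EnclosesVertex o p := by
  cases o with
  | none => trivial
  | some b =>
    unfold Encloses OverarcOf at hc
    unfold EnclosesVertex OverarcOfVertex at *
    omega

lemma encloses_of_isEndpoint (hX : ∀ a ∈ X, a.2 < a.1)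
    (hnc : X.Pairwise fun a b => ¬ Cross a b) (ho : ∀ b ∈ o, b ∈ X) (ha : a ∈ X)
    (hpa : IsEndpoint p a) (hp : EnclosesVertex o p) : Encloses o a := by
  cases o with
  | none => trivial
  | some b =>
    have hab : b ≠ a := by
      rintro rfl
      unfold IsEndpoint at hpa
      unfold EnclosesVertex OverarcOfVertex at hp
      omega
    exact overarcOf_of_not_cross_of_isEndpoint (hnc (ho b rfl) ha hab) (hX a ha) hpa hp

lemma encloses_or_forall_overarcOfVertex (hnc : X.Pairwise fun a b => ¬ Cross a b)
    (ho : ∀ b ∈ o, b ∈ X) (ha : a ∈ X) (hap : OverarcOfVertex a p)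
    (hp : EnclosesVertex o p) :
    Encloses o a ∨ ∀ r, EnclosesVertex o r → OverarcOfVertex a r := by
  cases o with
  | none => exact Or.inl trivial
  | some b =>
    by_cases hab : a = b
    · subst hab
      exact Or.inr fun r hr => hr
    rcases overarcOf_or_overarcOf_of_not_cross (hnc ha (ho b rfl) hab) hap hp with h | h
    · refine Or.inr fun r hr => ?_
      unfold OverarcOf at h
      unfold EnclosesVertex OverarcOfVertex at *
      omega
    · exact Or.inl h

lemma IsGap.region_eq (hnc : X.Pairwise fun a b => ¬ Cross a b) (ho : ∀ b ∈ o, b ∈ X)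
    (ho' : ∀ b ∈ o', b ∈ X) (hp : IsGap X o p) (hp' : IsGap X o' p) : o = o' := by
  cases o with
  | none =>
    cases o' with
    | none => rfl
    | some b' => exact absurd hp'.2.1 (hp.2.2 b' (ho' b' rfl) trivial)
  | some b =>
    cases o' with
    | none => exact absurd hp.2.1 (hp'.2.2 b (ho b rfl) trivial)
    | some b' =>
      by_contra hne
      have hbb : b ≠ b' := fun h => hne (h ▸ rfl)
      rcases overarcOf_or_overarcOf_of_not_cross (hnc (ho b rfl) (ho' b' rfl) hbb)
        hp.2.1 hp'.2.1 with h | h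
      · exact hp.2.2 b' (ho' b' rfl) h hp'.2.1
      · exact hp'.2.2 b (ho b rfl) h hp.2.1

lemma exists_isGap_of_not_cross (hcX : ∀ a ∈ X, ¬ Cross c a) (hc : c.2 < c.1) :
    ∃ o : Option Arc, (∀ b ∈ o, b ∈ X) ∧ IsGap X o c.2 ∧ IsGap X o c.1 := by
  have hiso2 := isolated_of_not_cross hcX (Or.inr rfl)
  have hiso1 := isolated_of_not_cross hcX (Or.inl rfl)
  have hcov1 : ∀ a ∈ X, OverarcOfVertex a c.1 → OverarcOfVertex a c.2 := by
    intro a ha hac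
    have h := overarcOf_of_not_cross_of_overarcOfVertex (hcX a ha) hc (Or.inl rfl) hac
    unfold OverarcOf at h
    exact ⟨h.1, by omega⟩
  by_cases hcov : ∃ a ∈ X, OverarcOfVertex a c.2
  · obtain ⟨a, ha, hac⟩ := hcov
    obtain ⟨m, hm, hmc2, hmin⟩ := exists_minimal_overarcOfVertex ha hac
    have hmc := overarcOf_of_not_cross_of_overarcOfVertex (hcX m hm) hc (Or.inr rfl) hmc2
    unfold OverarcOf at hmc
    refine ⟨some m, fun b hb => Option.mem_some_iff.1 hb ▸ hm, ⟨hiso2, hmc2, hmin⟩,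
      ⟨hiso1, ⟨by omega, hmc.2.2⟩, fun a ha hma hac1 => hmin a ha hma (hcov1 a ha hac1)⟩⟩
  · push Not at hcov
    exact ⟨none, by simp, isGap_none.2 ⟨hiso2, hcov⟩,
      isGap_none.2 ⟨hiso1, fun a ha hac1 => hcov a ha (hcov1 a ha hac1)⟩⟩

end Regions

section Insertion

variable {X : Set Arc} {o o' : Option Arc} {c : Arc}

lemma encloses_of_isGap (hc : c.2 < c.1) (hc2 : IsGap X o c.2) (hc1 : IsGap X o c.1) :
    Encloses o c := by
  cases o with
  | none => trivial
  | some b => exact ⟨hc2.2.1.1, hc, hc1.2.1.2⟩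

lemma not_cross_of_isGap (hnc : X.Pairwise fun a b => ¬ Cross a b) (ho : ∀ b ∈ o, b ∈ X)
    (hc2 : IsGap X o c.2) (hc1 : IsGap X o c.1) : ∀ a ∈ X, ¬ Cross c a := by
  have key : ∀ a ∈ X, ∀ q r, IsGap X o q → IsGap X o r → OverarcOfVertex a q →
      ¬ OverarcOfVertex a r → False := by
    intro a ha q r hq hr haq har
    rcases encloses_or_forall_overarcOfVertex hnc ho ha haq hq.2.1 with h | h
    · exact hq.2.2 a ha h haq
    · exact har (h r hr.2.1)
  rintro a ha ((h | h | h | h) | (h | h))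
  · exact hc1.1 a ha (Or.inl h)
  · exact hc1.1 a ha (Or.inr h)
  · exact hc2.1 a ha (Or.inl h)
  · exact hc2.1 a ha (Or.inr h)
  · exact key a ha c.1 c.2 hc1 hc2 ⟨h.2.1, h.2.2⟩ fun h' => by
      unfold OverarcOfVertex at h'
      omega
  · exact key a ha c.2 c.1 hc2 hc1 ⟨h.1, h.2.1⟩ fun h' => by
      unfold OverarcOfVertex at h'
      omega

lemma setOf_innerIsolatedOf_eq_inter (hX : ∀ a ∈ X, a.2 < a.1)
    (hnc : X.Pairwise fun a b => ¬ Cross a b) (ho : ∀ b ∈ o, b ∈ X) (hc : c.2 < c.1)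
    (hc2 : IsGap X o c.2) (hc1 : IsGap X o c.1) :
    {p | InnerIsolatedOf X c p} = {p | IsGap X o p} ∩ Ioo c.2 c.1 := by
  have hoc := encloses_of_isGap hc hc2 hc1
  ext p
  change InnerIsolatedOf X c p ↔ IsGap X o p ∧ OverarcOfVertex c p
  constructor
  · rintro ⟨hiso, hcp, hmin⟩
    refine ⟨⟨hiso, enclosesVertex_of_encloses hoc hcp, fun a ha hoa hap => ?_⟩, hcp⟩
    rcases overarcOf_or_overarcOf_of_not_cross (not_cross_of_isGap hnc ho hc2 hc1 a ha)
      hcp hap with h | h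
    · exact hmin a ha h hap
    · unfold OverarcOf at h
      exact hc2.2.2 a ha hoa ⟨h.1, by omega⟩
  · rintro ⟨⟨hiso, -, hmin⟩, hcp⟩
    refine ⟨hiso, hcp, fun a ha hca => hmin a ha ?_⟩
    unfold OverarcOf at hca
    exact encloses_of_isEndpoint hX hnc ho ha (Or.inl rfl)
      (enclosesVertex_of_encloses hoc ⟨by omega, hca.2.2⟩)

lemma setOf_innerIsolatedOf_union_singleton_self :
    {p | InnerIsolatedOf (X ∪ {c}) c p} = {p | InnerIsolatedOf X c p} := by
  ext p
  refine (isGap_union_singleton_iff (o := some c)).trans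
    ⟨fun h => h.1, fun h => ⟨h, ?_, ?_⟩⟩
  · have hcp := h.2.1
    unfold IsEndpoint
    unfold OverarcOfVertex at hcp
    omega
  · unfold Encloses OverarcOf
    omega

lemma setOf_isGap_union_singleton (hc : c.2 < c.1) (hc2 : IsGap X o c.2)
    (hc1 : IsGap X o c.1) :
    {p | IsGap (X ∪ {c}) o p} = {p | IsGap X o p} \ Icc c.2 c.1 := by
  ext p
  change IsGap _ o p ↔ IsGap X o p ∧ p ∉ Icc c.2 c.1
  rw [isGap_union_singleton_iff]
  refine and_congr_right fun _ => ?_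
  simp only [encloses_of_isGap hc hc2 hc1, true_implies, IsEndpoint, OverarcOfVertex, mem_Icc]
  omega

lemma setOf_isGap_union_singleton_of_ne (hnc : X.Pairwise fun a b => ¬ Cross a b)
    (ho : ∀ b ∈ o, b ∈ X) (ho' : ∀ b ∈ o', b ∈ X) (hne : o' ≠ o) (hc : c.2 < c.1)
    (hc2 : IsGap X o c.2) (hc1 : IsGap X o c.1) :
    {p | IsGap (X ∪ {c}) o' p} = {p | IsGap X o' p} := by
  ext p
  refine isGap_union_singleton_iff.trans
    ⟨fun h => h.1, fun hp => ⟨hp, ?_, fun ho'c hcp => ?_⟩⟩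
  · rintro (rfl | rfl)
    exacts [hne (hp.region_eq hnc ho' ho hc1), hne (hp.region_eq hnc ho' ho hc2)]
  · -- otherwise `c.2` would be a gap of `o'` as well
    have hcX := not_cross_of_isGap hnc ho hc2 hc1
    refine hne (IsGap.region_eq hnc ho' ho ⟨hc2.1, ?_, fun a ha ho'a hac => ?_⟩ hc2)
    · cases o' with
      | none => trivial
      | some b =>
        unfold Encloses OverarcOf at ho'c
        exact ⟨ho'c.1, by omega⟩
    · have h := overarcOf_of_not_cross_of_overarcOfVertex (hcX a ha) hc (Or.inr rfl) hac
      unfold OverarcOf at h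
      unfold OverarcOfVertex at hcp
      exact hp.2.2 a ha ho'a ⟨by omega, by omega⟩

end Insertion

section Admissibility

variable {w : ℤ} {X : Set Arc} {a : Arc} {x y : ℤ}

lemma fst_lt_snd_of_not_cross {b : Arc} (h : ¬ Cross a b) (h2 : a.2 ≤ b.2) (h1 : a.1 < b.1)
    (hb : b.2 < b.1) : a.1 < b.2 := by
  unfold Cross SharesEndpoint StrictCross at h
  omega

lemma setOf_innerIsolatedOf_eq_insert (hiso : Isolated X (x + 1)) (hlt : x + 1 < y) :
    {p | InnerIsolatedOf X (y, x) p} = insert (x + 1) {p | InnerIsolatedOf X (y, x + 1) p} := by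
  ext p
  simp only [mem_insert_iff, mem_ofPred_eq, InnerIsolatedOf, OverarcOfVertex, OverarcOf]
  constructor
  · rintro ⟨hp, ⟨h1, h2⟩, hmin⟩
    rcases (by omega : p = x + 1 ∨ x + 1 < p) with rfl | h1'
    · exact Or.inl rfl
    · exact Or.inr ⟨hp, ⟨h1', h2⟩, fun a ha h => hmin a ha ⟨by omega, h.2⟩⟩
  · rintro (rfl | ⟨hp, ⟨h1, h2⟩, hmin⟩)
    · exact ⟨hiso, ⟨by omega, hlt⟩, fun a ha h h' => by omega⟩
    · refine ⟨hp, ⟨by omega, h2⟩, fun a ha h => hmin a ha ⟨?_, h.2⟩⟩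
      have h3 : x + 1 ≠ a.2 := fun h' => hiso a ha (Or.inr h')
      omega

lemma setOf_innerIsolatedOf_eq_of_overarcOf (ha : a ∈ X) (hya : OverarcOf (y, x) a)
    (ha2 : a.2 = x + 1) (hright : ∀ b ∈ X, x < b.2 → b.2 < b.1 → a.1 < b.1 → a.1 < b.2) :
    {p | InnerIsolatedOf X (y, x) p} = {p | InnerIsolatedOf X (y, a.1) p} := by
  unfold OverarcOf at hya
  dsimp only at hya
  ext p
  simp only [mem_ofPred_eq, InnerIsolatedOf, OverarcOfVertex, OverarcOf]
  constructor
  · rintro ⟨hp, ⟨h1, h2⟩, hmin⟩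
    have h1' : a.1 < p := by
      by_contra hle
      rcases (by omega : p = a.1 ∨ p = a.2 ∨ (a.2 < p ∧ p < a.1)) with h | h | h
      · exact hp a ha (Or.inl h)
      · exact hp a ha (Or.inr h)
      · exact hmin a ha ⟨by omega, hya.2⟩ h
    exact ⟨hp, ⟨h1', h2⟩, fun b hb h => hmin b hb ⟨by omega, h.2⟩⟩
  · rintro ⟨hp, ⟨h1, h2⟩, hmin⟩
    refine ⟨hp, ⟨by omega, h2⟩, fun b hb h hbp => hmin b hb ⟨?_, h.2⟩ hbp⟩
    exact hright b hb h.1 h.2.1 (by omega)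

lemma arcs_inside_of_le {z : ℤ}
    (hend : ∀ a ∈ X, ∀ p, IsEndpoint p a → x < p → p < y →
      x < a.2 ∧ a.2 < a.1 ∧ a.1 < y)
    (hz : ∀ a ∈ X, x < a.2 → a.2 < a.1 → z < a.1 → z < a.2) (hxz : x ≤ z) :
    ∀ a ∈ X, ∀ p, IsEndpoint p a → z < p → p < y →
      z < a.2 ∧ a.2 < a.1 ∧ a.1 < y := by
  intro a ha p hpa h1 h2
  obtain ⟨g1, g2, g3⟩ := hend a ha p hpa (by omega) h2
  exact ⟨hz a ha g1 g2 (by unfold IsEndpoint at hpa; omega), g2, g3⟩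

/-- Walking from `x` to `y`, every vertex is either inner-isolated for `(y, x)` or lies on the
closed span of an outermost arc inside `(y, x)`, and admissibility makes the number of
vertices of such a span a multiple of `w - 1`. -/
lemma sub_one_dvd_ncard_innerIsolatedOf (hadm : ∀ a ∈ X, IsAdmissible w a)
    (hnc : X.Pairwise fun a b => ¬ Cross a b) (y : ℤ) :
    ∀ x, x < y →
      (∀ a ∈ X, ∀ p, IsEndpoint p a → x < p → p < y →
        x < a.2 ∧ a.2 < a.1 ∧ a.1 < y) →
      (w - 1) ∣ y - x - 1 - {p | InnerIsolatedOf X (y, x) p}.ncard := by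
  intro x
  induction hk : (y - x).toNat using Nat.strong_induction_on generalizing x with
  | _ k ih =>
  intro hxy hend
  rcases (by omega : x + 1 = y ∨ x + 1 < y) with rfl | hlt
  · have hempty : {p | InnerIsolatedOf X (x + 1, x) p} = ∅ :=
      eq_empty_of_forall_notMem fun p hp => by
        have h := hp.2.1
        unfold OverarcOfVertex at h
        dsimp only at h
        omega
    simp [hempty]
  by_cases hiso : Isolated X (x + 1)
  · have hrec := ih _ (by omega) (x + 1) rfl hlt <| arcs_inside_of_le hend (fun a ha h1 _ _ => by
      have h2 : x + 1 ≠ a.2 := fun h' => hiso a ha (Or.inr h')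
      omega) (by omega)
    have hfin : {p | InnerIsolatedOf X (y, x + 1) p}.Finite :=
      (finite_Ioo _ _).subset fun p hp => hp.2.1
    rw [setOf_innerIsolatedOf_eq_insert hiso hlt,
      ncard_insert_of_notMem (fun h => by have := h.2.1.1; dsimp only at this; omega) hfin]
    convert hrec using 1
    push_cast
    ring
  -- otherwise `x + 1` is the target of an outermost arc `a` inside `(y, x)`; skip over it
  obtain ⟨a, ha, hpa⟩ : ∃ a ∈ X, IsEndpoint (x + 1) a := by
    simpa [Isolated] using hiso
  have hya := hend a ha (x + 1) hpa (by omega) hlt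
  have ha2 : a.2 = x + 1 := by
    unfold IsEndpoint at hpa
    omega
  have hright : ∀ b ∈ X, x < b.2 → b.2 < b.1 → a.1 < b.1 → a.1 < b.2 :=
    fun b hb h2 h21 h1 =>
      fst_lt_snd_of_not_cross (hnc ha hb (by rintro rfl; omega)) (by omega) h1 h21
  have hrec := ih (y - a.1).toNat (by omega) a.1 rfl hya.2.2
    (arcs_inside_of_le hend hright (by omega))
  have hsplit : y - x - 1 - ({p | InnerIsolatedOf X (y, a.1) p}.ncard : ℤ) =
      (y - a.1 - 1 - {p | InnerIsolatedOf X (y, a.1) p}.ncard) - (a.2 - a.1 - 1) := by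
    rw [ha2]
    ring
  rw [setOf_innerIsolatedOf_eq_of_overarcOf ha hya ha2 hright, hsplit]
  exact dvd_sub hrec (hadm a ha).2

lemma isAdmissible_of_ncard_innerIsolatedOf (hadm : ∀ a ∈ X, IsAdmissible w a)
    (hnc : X.Pairwise fun a b => ¬ Cross a b) {c : Arc} (hc : c.2 < c.1)
    (hend : ∀ a ∈ X, ∀ p, IsEndpoint p a → OverarcOfVertex c p → OverarcOf c a)
    (hcard : ({p | InnerIsolatedOf X c p}.ncard : ℤ) = -w - 1) : IsAdmissible w c := by
  have hdvd := sub_one_dvd_ncard_innerIsolatedOf hadm hnc c.1 c.2 hc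
    fun a ha p hpa h1 h2 => hend a ha p hpa ⟨h1, h2⟩
  have hle : {p | InnerIsolatedOf X c p}.ncard ≤ (c.1 - c.2 - 1).toNat := by
    calc _ ≤ (Ioo c.2 c.1).ncard := ncard_le_ncard (fun p hp => hp.2.1) (finite_Ioo _ _)
      _ = _ := by rw [← Finset.coe_Ioo, ncard_coe_finset, Int.card_Ioo]
  refine ⟨by omega, ?_⟩
  rw [hcard] at hdvd
  rw [show c.2 - c.1 - 1 = (w - 1) - (c.1 - c.2 - 1 - (-w - 1)) by ring]
  exact dvd_sub (dvd_refl _) hdvd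

end Admissibility

def Chords (Q : Set ℤ) (n : ℕ) : Set Arc :=
  {c | c.2 < c.1 ∧ c.2 ∈ Q ∧ c.1 ∈ Q ∧ (Q ∩ Ioo c.2 c.1).encard = n}

lemma encard_range_inter_Ioo {α : Type*} [LinearOrder α] {m : ℕ} (f : Fin m ↪o α)
    (i j : Fin m) : (range f ∩ Ioo (f i) (f j)).encard = (j - i - 1 : ℕ) := by
  have himage : range f ∩ Ioo (f i) (f j) = f '' Ioo i j := by
    ext p
    simp only [mem_inter_iff, mem_range, mem_Ioo, mem_image]
    constructor
    · rintro ⟨⟨k, rfl⟩, h1, h2⟩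
      exact ⟨k, ⟨f.lt_iff_lt.1 h1, f.lt_iff_lt.1 h2⟩, rfl⟩
    · rintro ⟨k, ⟨h1, h2⟩, rfl⟩
      exact ⟨⟨k, rfl⟩, f.lt_iff_lt.2 h1, f.lt_iff_lt.2 h2⟩
  rw [himage, f.injective.encard_image, ← Finset.coe_Ioo, encard_coe_eq_coe_finsetCard,
    Fin.card_Ioo]

lemma chords_range {n : ℕ} (f : Fin (2 * n + 2) ↪o ℤ) :
    Chords (range f) n =
      range fun i : Fin (n + 1) => (f ⟨i + n + 1, by omega⟩, f ⟨i, by omega⟩) := by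
  ext ⟨c1, c2⟩
  constructor
  · rintro ⟨hlt, ⟨i, rfl⟩, ⟨j, rfl⟩, hcnt⟩
    rw [encard_range_inter_Ioo] at hcnt
    have hcnt' : (j - i - 1 : ℕ) = n := by exact_mod_cast hcnt
    have := Fin.lt_def.1 (f.lt_iff_lt.1 hlt)
    refine ⟨⟨i, by omega⟩, ?_⟩
    simp only [Prod.mk.injEq, and_true]
    congr 1
    ext
    simp only
    omega
  · rintro ⟨i, h⟩
    simp only [Prod.mk.injEq] at h
    obtain ⟨rfl, rfl⟩ := h
    refine ⟨f.lt_iff_lt.2 (Fin.lt_def.2 (by simp)), ⟨_, rfl⟩, ⟨_, rfl⟩, ?_⟩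
    rw [encard_range_inter_Ioo]
    congr 1
    simp only
    omega

lemma encard_chords {Q : Set ℤ} {n : ℕ} (hQ : Q.encard = 2 * n + 2) :
    (Chords Q n).encard = n + 1 := by
  have hfin : Q.Finite := finite_of_encard_eq_coe (k := 2 * n + 2) (by rw [hQ]; norm_cast)
  have hcard : hfin.toFinset.card = 2 * n + 2 := by
    have h := hfin.encard_eq_coe_toFinset_card
    rw [hQ] at h
    exact_mod_cast h.symm
  set f := hfin.toFinset.orderEmbOfFin hcard
  have hQf : Q = range f := by
    rw [Finset.range_orderEmbOfFin, Finite.coe_toFinset]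
  have hinj : Function.Injective fun i : Fin (n + 1) =>
      (f ⟨i + n + 1, by omega⟩, f ⟨i, by omega⟩) := fun i j h => by
    simpa [Fin.ext_iff] using congrArg Prod.snd h
  rw [hQf, chords_range, ← image_univ, hinj.encard_image, encard_univ,
    ENat.card_eq_coe_fintype_card, Fintype.card_fin]
  push_cast
  rfl

lemma encard_inter_Icc {α : Type*} [LinearOrder α] {Q : Set α} {x y : α} (hxy : x < y)
    (hx : x ∈ Q) (hy : y ∈ Q) : (Q ∩ Icc x y).encard = (Q ∩ Ioo x y).encard + 2 := by
  rw [← Ico_insert_right hxy.le, ← Ioo_insert_left hxy, inter_comm, insert_inter_of_mem hy,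
    insert_inter_of_mem hx, encard_insert_of_notMem (by simp [hxy.ne']),
    encard_insert_of_notMem (by simp), inter_comm, add_assoc]
  rfl

def HasGapsCard (X : Set Arc) (n : ℕ) : Prop :=
  ∀ o : Option Arc, (∀ b ∈ o, b ∈ X) → {p | IsGap X o p}.encard = n

section GapCounts

variable {w : ℤ} {n : ℕ} {X : Set Arc} {o : Option Arc} {c : Arc}

lemma setOf_outerIsolated_eq : {p | OuterIsolated X p} = {p | IsGap X none p} :=
  ext fun _ => isGap_none.symm

lemma hasGapsCard_of_isRiedtmann (hS : IsRiedtmann w X)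
    (hout : {p : ℤ | OuterIsolated X p}.encard = ((-w - 1).toNat : ℕ∞)) :
    HasGapsCard X (-w - 1).toNat := by
  rintro (_ | b) ho
  · rwa [← setOf_outerIsolated_eq]
  · exact hS.1.2.2.1 b (ho b rfl)

lemma isHomConfig_of_hasGapsCard (hn : (n : ℤ) = -w - 1) (hadm : ∀ a ∈ X, IsAdmissible w a)
    (hnc : X.Pairwise fun a b => ¬ Cross a b) (hX : HasGapsCard X n) : IsHomConfig w X := by
  have hn' : (-w - 1).toNat = n := by omega
  have hw : (-w).toNat = n + 1 := by omega
  refine ⟨hadm, hnc, fun a ha => hn' ▸ hX (some a) fun b hb => ?_, ?_⟩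
  · rwa [Option.mem_some_iff.1 hb] at ha
  · rw [setOf_outerIsolated_eq, hX none (by simp), hw]
    norm_cast
    omega

lemma encard_isGap_le_of_isHomConfig (hn : (n : ℤ) = -w - 1) (hX : IsHomConfig w X)
    (ho : ∀ b ∈ o, b ∈ X) : {p | IsGap X o p}.encard ≤ n + 1 := by
  have hn' : (-w - 1).toNat = n := by omega
  have hw : (-w).toNat = n + 1 := by omega
  cases o with
  | none => simpa only [← setOf_outerIsolated_eq, hw, Nat.cast_add, Nat.cast_one] using hX.2.2.2
  | some b =>
    refine (hX.2.2.1 b (ho b rfl)).trans_le ?_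
    rw [hn']
    norm_cast
    omega

lemma eq_some_or_forall_mem_of_union_singleton (ho : ∀ b ∈ o, b ∈ X ∪ {c}) :
    o = some c ∨ ∀ b ∈ o, b ∈ X := by
  cases o with
  | none => simp
  | some b =>
    rcases ho b rfl with hb | rfl
    · exact Or.inr fun b' hb' => Option.mem_some_iff.1 hb' ▸ hb
    · exact Or.inl rfl

end GapCounts

section Replacements

variable {w : ℤ} {n : ℕ} {X : Set Arc} {o : Option Arc} {c : Arc}

lemma hasGapsCard_union_singleton (hX : ∀ a ∈ X, a.2 < a.1)
    (hnc : X.Pairwise fun a b => ¬ Cross a b) (ho : ∀ b ∈ o, b ∈ X)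
    (hQ : {p | IsGap X o p}.encard = 2 * n + 2)
    (hother : ∀ o', (∀ b ∈ o', b ∈ X) → o' ≠ o → {p | IsGap X o' p}.encard = n)
    (hc : c ∈ Chords {p | IsGap X o p} n) : HasGapsCard (X ∪ {c}) n := by
  obtain ⟨hc, hc2, hc1, hcnt⟩ := hc
  intro o' ho'
  rcases eq_some_or_forall_mem_of_union_singleton ho' with rfl | ho'X
  · change {p | InnerIsolatedOf _ c p}.encard = n
    rwa [setOf_innerIsolatedOf_union_singleton_self,
      setOf_innerIsolatedOf_eq_inter hX hnc ho hc hc2 hc1]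
  by_cases hne : o' = o
  · subst hne
    have h := encard_sdiff_add_encard_inter {p | IsGap X o' p} (Icc c.2 c.1)
    rw [encard_inter_Icc hc hc2 hc1, hcnt, hQ, ← setOf_isGap_union_singleton hc hc2 hc1] at h
    exact ENat.add_left_injective_of_ne_top (ENat.natCast_ne_top (n + 2))
      (by push_cast; rw [h]; ring)
  · rw [setOf_isGap_union_singleton_of_ne hnc ho ho'X hne hc hc2 hc1]
    exact hother o' ho'X hne

lemma isHomConfig_union_singleton (hw : w ≤ -1) (hn : (n : ℤ) = -w - 1)
    (hadm : ∀ a ∈ X, IsAdmissible w a) (hnc : X.Pairwise fun a b => ¬ Cross a b)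
    (ho : ∀ b ∈ o, b ∈ X) (hQ : {p | IsGap X o p}.encard = 2 * n + 2)
    (hother : ∀ o', (∀ b ∈ o', b ∈ X) → o' ≠ o → {p | IsGap X o' p}.encard = n)
    (hc : c ∈ Chords {p | IsGap X o p} n) : IsHomConfig w (X ∪ {c}) := by
  have hX : ∀ a ∈ X, a.2 < a.1 := fun a ha => (hadm a ha).snd_lt_fst hw
  obtain ⟨hlt, hc2, hc1, hcnt⟩ := hc
  have hcX := not_cross_of_isGap hnc ho hc2 hc1
  have hinner : ({p | InnerIsolatedOf X c p}.ncard : ℤ) = -w - 1 := by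
    rw [setOf_innerIsolatedOf_eq_inter hX hnc ho hlt hc2 hc1, ncard_def, hcnt, ← hn]
    rfl
  have hadmc := isAdmissible_of_ncard_innerIsolatedOf hadm hnc hlt
    (fun a ha p hpa hcp => overarcOf_of_not_cross_of_isEndpoint (hcX a ha) (hX a ha) hpa hcp)
    hinner
  refine isHomConfig_of_hasGapsCard hn ?_ (pairwise_not_cross_union_singleton hnc hcX)
    (hasGapsCard_union_singleton hX hnc ho hQ hother ⟨hlt, hc2, hc1, hcnt⟩)
  rintro a (ha | rfl)
  exacts [hadm a ha, hadmc]

lemma mem_chords_of_isHomConfig (hw : w ≤ -1) (hn : (n : ℤ) = -w - 1)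
    (hadm : ∀ a ∈ X, IsAdmissible w a) (hnc : X.Pairwise fun a b => ¬ Cross a b)
    (ho : ∀ b ∈ o, b ∈ X) (hQ : {p | IsGap X o p}.encard = 2 * n + 2)
    (hother : ∀ o', (∀ b ∈ o', b ∈ X) → o' ≠ o → {p | IsGap X o' p}.encard = n)
    (hT : IsHomConfig w (X ∪ {c})) : c ∈ Chords {p | IsGap X o p} n := by
  have hX : ∀ a ∈ X, a.2 < a.1 := fun a ha => (hadm a ha).snd_lt_fst hw
  have hc : c.2 < c.1 := (hT.1 c (Or.inr rfl)).snd_lt_fst hw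
  have hcX : c ∉ X := by
    intro hcX
    have h := encard_isGap_le_of_isHomConfig hn hT (o := o) fun b hb => Or.inl (ho b hb)
    rw [union_eq_left.2 (singleton_subset_iff.2 hcX), hQ] at h
    norm_cast at h
    omega
  have hcross : ∀ a ∈ X, ¬ Cross c a := fun a ha =>
    hT.2.1 c (Or.inr rfl) a (Or.inl ha) fun h => hcX (h ▸ ha)
  obtain ⟨o', ho', hc2, hc1⟩ := exists_isGap_of_not_cross hcross hc
  have hcnt : ({p | IsGap X o' p} ∩ Ioo c.2 c.1).encard = n := by
    rw [← setOf_innerIsolatedOf_eq_inter hX hnc ho' hc hc2 hc1,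
      ← setOf_innerIsolatedOf_union_singleton_self, hT.2.2.1 c (Or.inr rfl)]
    congr 1
    omega
  -- `o'` has at least `n + 2` gaps, while the regions other than `o` have `n`
  obtain rfl : o' = o := by
    by_contra hne
    have h := encard_le_encard (inter_subset_left : {p | IsGap X o' p} ∩ Icc c.2 c.1 ⊆ _)
    rw [encard_inter_Icc hc hc2 hc1, hcnt, hother o' ho' hne] at h
    norm_cast at h
    omega
  exact ⟨hc, hc2, hc1, hcnt⟩

lemma gapsCard_of_hasGapsCard_union_singleton (hX : ∀ a ∈ X, a.2 < a.1)
    (hnc : X.Pairwise fun a b => ¬ Cross a b) (ho : ∀ b ∈ o, b ∈ X) (hc : c.2 < c.1)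
    (hc2 : IsGap X o c.2) (hc1 : IsGap X o c.1) (hT : HasGapsCard (X ∪ {c}) n) :
    c ∈ Chords {p | IsGap X o p} n ∧ {p | IsGap X o p}.encard = 2 * n + 2 ∧
      ∀ o', (∀ b ∈ o', b ∈ X) → o' ≠ o → {p | IsGap X o' p}.encard = n := by
  have hregion : ∀ o' : Option Arc, (∀ b ∈ o', b ∈ X) → ∀ b ∈ o', b ∈ X ∪ {c} :=
    fun o' ho' b hb => Or.inl (ho' b hb)
  have hcnt : ({p | IsGap X o p} ∩ Ioo c.2 c.1).encard = n := by
    rw [← setOf_innerIsolatedOf_eq_inter hX hnc ho hc hc2 hc1,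
      ← setOf_innerIsolatedOf_union_singleton_self]
    exact hT (some c) fun b hb => Or.inr (Option.mem_some_iff.1 hb).symm
  refine ⟨⟨hc, hc2, hc1, hcnt⟩, ?_, fun o' ho' hne => ?_⟩
  · rw [← encard_sdiff_add_encard_inter _ (Icc c.2 c.1), encard_inter_Icc hc hc2 hc1, hcnt,
      ← setOf_isGap_union_singleton hc hc2 hc1, hT o (hregion o ho)]
    ring
  · rw [← setOf_isGap_union_singleton_of_ne hnc ho ho' hne hc hc2 hc1]
    exact hT o' (hregion o' ho')

end Replacements

/-- in a combinatorial `w`-Riedtmann configuration (`w ≤ -1`) with exactly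
`|w| - 1` outer-isolated vertices, every arc has exactly `|w| - 1` replacements. -/
theorem stmt_2 (w : ℤ) (hw : w ≤ -1) (S : Set Arc) (hS : IsRiedtmann w S)
    (hout : {p : ℤ | OuterIsolated S p}.encard = ((-w - 1).toNat : ℕ∞))
    (s : Arc) (hs : s ∈ S) :
    {t : Arc | IsReplacement w S s t}.encard = ((-w - 1).toNat : ℕ∞) := by
  set n := (-w - 1).toNat
  have hn : (n : ℤ) = -w - 1 := Int.toNat_of_nonneg (by omega)
  have hgaps := hasGapsCard_of_isRiedtmann hS hout
  obtain ⟨⟨hadm, hnc, -⟩, -⟩ := hS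
  set X := S \ {s}
  have hXs : X ∪ {s} = S := sdiff_union_of_subset (singleton_subset_iff.2 hs)
  have hadmX : ∀ a ∈ X, IsAdmissible w a := fun a ha => hadm a ha.1
  have hncX : X.Pairwise fun a b => ¬ Cross a b := fun a ha b hb => hnc a ha.1 b hb.1
  have hX : ∀ a ∈ X, a.2 < a.1 := fun a ha => (hadmX a ha).snd_lt_fst hw
  have hs21 := (hadm s hs).snd_lt_fst hw
  obtain ⟨o, ho, hs2, hs1⟩ :=
    exists_isGap_of_not_cross (fun a (ha : a ∈ X) => hnc s hs a ha.1 fun h => ha.2 h.symm) hs21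
  obtain ⟨hsQ, hQ, hother⟩ := gapsCard_of_hasGapsCard_union_singleton hX hncX ho hs21 hs2 hs1
    (hXs ▸ hgaps)
  have hrepl : {t | IsReplacement w S s t} = Chords {p | IsGap X o p} n \ {s} := by
    ext t
    exact and_comm.trans (and_congr_left'
      ⟨mem_chords_of_isHomConfig hw hn hadmX hncX ho hQ hother,
        isHomConfig_union_singleton hw hn hadmX hncX ho hQ hother⟩)
  rw [hrepl]
  exact ENat.add_left_injective_of_ne_top ENat.one_ne_top
    ((encard_sdiff_singleton_add_one hsQ).trans (encard_chords hQ))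
end

section
/- Let w ≤ -1 be an integer and let l be an integer with 0 ≤ l ≤ |w| - 1. Then there exist a combinatorial w-Riedtmann configuration S and an arc s ∈ S such that s has exactly l replacements. -/
open Set

/-! ### Auxiliary construction -/

/-- Bases of arcs in our model configuration. -/
def Bset (m l u : ℤ) : Set ℤ :=
  {x | (∃ k : ℤ, k ≤ -1 ∧ x = (m+1)*k) ∨ x = u ∨ (∃ k : ℤ, 1 ≤ k ∧ x = (m+1)*k + l)}

/-- The model configuration: arcs `(x+m, x)` for `x ∈ Bset m l u`. -/
def Gset (m l u : ℤ) : Set Arc := {a | ∃ x ∈ Bset m l u, a = (x + m, x)}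

lemma keyC (m k k' : ℤ) (hm : 1 ≤ m) (h : k + 1 ≤ k') : (m+1)*k + m + 1 ≤ (m+1)*k' := by
  have h2 : (m+1)*(k+1) ≤ (m+1)*k' := mul_le_mul_of_nonneg_left h (by linarith)
  nlinarith [h2]

lemma Bset_sep (m l u : ℤ) (hm : 1 ≤ m) (hl0 : 0 ≤ l) (hu0 : 0 ≤ u) (hul : u ≤ l)
    {x y : ℤ} (hx : x ∈ Bset m l u) (hy : y ∈ Bset m l u) :
    x = y ∨ x + m + 1 ≤ y ∨ y + m + 1 ≤ x := by
  obtain (⟨k, hk, rfl⟩ | rfl | ⟨k, hk, rfl⟩) := hx <;>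
    obtain (⟨k', hk', rfl⟩ | rfl | ⟨k', hk', rfl⟩) := hy
  · rcases lt_trichotomy k k' with h | rfl | h
    · exact Or.inr (Or.inl (by linarith [keyC m k k' hm (by omega)]))
    · exact Or.inl rfl
    · exact Or.inr (Or.inr (by linarith [keyC m k' k hm (by omega)]))
  · exact Or.inr (Or.inl (by linarith [keyC m k 0 hm (by omega)]))
  · exact Or.inr (Or.inl (by linarith [keyC m k 0 hm (by omega), keyC m 0 k' hm (by omega)]))
  · exact Or.inr (Or.inr (by linarith [keyC m k' 0 hm (by omega)]))
  · exact Or.inl rfl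
  · exact Or.inr (Or.inl (by linarith [keyC m 0 k' hm (by omega)]))
  · exact Or.inr (Or.inr (by linarith [keyC m k' 0 hm (by omega), keyC m 0 k hm (by omega)]))
  · exact Or.inr (Or.inr (by linarith [keyC m 0 k hm (by omega)]))
  · rcases lt_trichotomy k k' with h | rfl | h
    · exact Or.inr (Or.inl (by linarith [keyC m k k' hm (by omega)]))
    · exact Or.inl rfl
    · exact Or.inr (Or.inr (by linarith [keyC m k' k hm (by omega)]))

lemma noncross_of_sep (m x y : ℤ) (hm : 1 ≤ m) (h : x + m + 1 ≤ y ∨ y + m + 1 ≤ x) :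
    ¬ Cross ((x+m, x) : Arc) ((y+m, y) : Arc) := by
  intro hc
  simp only [Cross, SharesEndpoint, StrictCross] at hc
  omega

lemma cell_left (m l u p : ℤ) (hm : 1 ≤ m) (hp : p ≤ -1) :
    ∃ x ∈ Bset m l u, x ≤ p ∧ p ≤ x + m ∧ x + m ≤ -1 := by
  set k := p / (m+1) with hkdef
  have hdm : (m+1) * k + p % (m+1) = p := Int.mul_ediv_add_emod p (m+1)
  have hr0 : 0 ≤ p % (m+1) := Int.emod_nonneg p (by omega)
  have hr1 : p % (m+1) < m + 1 := Int.emod_lt_of_pos p (by omega)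
  have hk : k ≤ -1 := by
    by_contra hcon; push_neg at hcon
    have h0 : 0 ≤ (m+1) * k := mul_nonneg (by linarith) (by omega)
    linarith
  have hbd := keyC m k 0 hm (by omega)
  refine ⟨(m+1)*k, Or.inl ⟨k, hk, rfl⟩, by linarith, by linarith, by nlinarith [hbd]⟩

lemma cell_right (m l u p : ℤ) (hm : 1 ≤ m) (hl0 : 0 ≤ l) (hp : m + l + 1 ≤ p) :
    ∃ x ∈ Bset m l u, x ≤ p ∧ p ≤ x + m ∧ m + l + 1 ≤ x := by
  set k := (p - l) / (m+1) with hkdef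
  have hdm : (m+1) * k + (p - l) % (m+1) = p - l := Int.mul_ediv_add_emod (p - l) (m+1)
  have hr0 : 0 ≤ (p - l) % (m+1) := Int.emod_nonneg (p - l) (by omega)
  have hr1 : (p - l) % (m+1) < m + 1 := Int.emod_lt_of_pos (p - l) (by omega)
  have hk : 1 ≤ k := by
    by_contra hcon; push_neg at hcon
    have h0 : (m+1) * k ≤ (m+1) * 0 := mul_le_mul_of_nonneg_left (by omega) (by linarith)
    nlinarith [h0]
  have hbd := keyC m 0 k hm (by omega)
  refine ⟨(m+1)*k + l, Or.inr (Or.inr ⟨k, hk, rfl⟩), by linarith, by linarith, by nlinarith [hbd]⟩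

lemma isolated_inner (m l u : ℤ) (hm : 1 ≤ m) (hl0 : 0 ≤ l) (hu0 : 0 ≤ u) (hul : u ≤ l)
    {x p : ℤ} (hx : x ∈ Bset m l u) (h1 : x < p) (h2 : p < x + m) :
    Isolated (Gset m l u) p := by
  rintro a ⟨y, hy, rfl⟩ hp
  rcases Bset_sep m l u hm hl0 hu0 hul hx hy with h | h | h <;>
    · simp only [IsEndpoint] at hp
      omega

lemma inner_eq (m l u : ℤ) (hm : 1 ≤ m) (hl0 : 0 ≤ l) (hu0 : 0 ≤ u) (hul : u ≤ l)
    {x : ℤ} (hx : x ∈ Bset m l u) :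
    {p : ℤ | InnerIsolatedOf (Gset m l u) (x+m, x) p} = Set.Ioo x (x+m) := by
  ext p
  constructor
  · rintro ⟨-, h2, -⟩
    exact ⟨h2.1, h2.2⟩
  · rintro ⟨h1, h2⟩
    refine ⟨isolated_inner m l u hm hl0 hu0 hul hx h1 h2, ⟨h1, h2⟩, ?_⟩
    rintro c ⟨y, hy, rfl⟩ hov
    simp only [OverarcOf] at hov
    omega

lemma outer_subset (m l u : ℤ) (hm : 1 ≤ m) (hl0 : 0 ≤ l) (hu0 : 0 ≤ u) (hul : u ≤ l) :
    {p : ℤ | OuterIsolated (Gset m l u) p} ⊆ (Set.Ico 0 u ∪ Set.Ioc (u+m) (m+l)) := by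
  rintro p ⟨hiso, hover⟩
  have key : ∀ x ∈ Bset m l u, ¬(x ≤ p ∧ p ≤ x + m) := by
    rintro x hx ⟨h1, h2⟩
    by_cases e1 : p = x
    · exact hiso (x+m, x) ⟨x, hx, rfl⟩ (Or.inr e1)
    by_cases e2 : p = x + m
    · exact hiso (x+m, x) ⟨x, hx, rfl⟩ (Or.inl e2)
    exact hover (x+m, x) ⟨x, hx, rfl⟩ ⟨by omega, by omega⟩
  have hA : 0 ≤ p := by
    by_contra h; push_neg at h
    obtain ⟨x, hx, h1, h2, h3⟩ := cell_left m l u p hm (by omega)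
    exact key x hx ⟨h1, h2⟩
  have hB : p ≤ m + l := by
    by_contra h; push_neg at h
    obtain ⟨x, hx, h1, h2, h3⟩ := cell_right m l u p hm hl0 (by omega)
    exact key x hx ⟨h1, h2⟩
  have hC := key u (Or.inr (Or.inl rfl))
  simp only [Set.mem_union, Set.mem_Ico, Set.mem_Ioc]
  omega

lemma outer_bound (m l u : ℤ) (hm : 1 ≤ m) (hl0 : 0 ≤ l) (hu0 : 0 ≤ u) (hul : u ≤ l)
    (b : ℤ) (hb : l ≤ b) :
    {p : ℤ | OuterIsolated (Gset m l u) p}.encard ≤ (b.toNat : ℕ∞) := by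
  have e1 : (Set.Ico (0:ℤ) u).encard = (u.toNat : ℕ∞) := by
    rw [← Finset.coe_Ico, Set.encard_coe_eq_coe_finsetCard, Int.card_Ico]
    congr 1; omega
  have e2 : (Set.Ioc (u+m) (m+l)).encard = ((l-u).toNat : ℕ∞) := by
    rw [← Finset.coe_Ioc, Set.encard_coe_eq_coe_finsetCard, Int.card_Ioc]
    congr 1; omega
  refine le_trans (Set.encard_mono (outer_subset m l u hm hl0 hu0 hul))
    (le_trans (Set.encard_union_le _ _) ?_)
  rw [e1, e2, ← Nat.cast_add, Nat.cast_le]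
  omega

lemma hom_G (m l u : ℤ) (hm : 1 ≤ m) (hl0 : 0 ≤ l) (hl : l ≤ m - 1) (hu0 : 0 ≤ u)
    (hul : u ≤ l) : IsHomConfig (-m) (Gset m l u) := by
  refine ⟨?_, ?_, ?_, ?_⟩
  · rintro a ⟨x, hx, rfl⟩
    exact ⟨by simp only; omega, ⟨1, by simp only; ring⟩⟩
  · rintro a ⟨x, hx, rfl⟩ b ⟨y, hy, rfl⟩ hne
    rcases Bset_sep m l u hm hl0 hu0 hul hx hy with h | h | h
    · exact absurd (by rw [h]) hne
    · exact noncross_of_sep m x y hm (Or.inl h)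
    · exact noncross_of_sep m x y hm (Or.inr h)
  · rintro a ⟨x, hx, rfl⟩
    rw [inner_eq m l u hm hl0 hu0 hul hx, ← Finset.coe_Ioo,
      Set.encard_coe_eq_coe_finsetCard, Int.card_Ioo]
    congr 1; omega
  · have := outer_bound m l u hm hl0 hu0 hul m (by omega)
    convert this using 2
    omega

/-- for every `0 ≤ l ≤ |w| - 1` (`w ≤ -1`) there are a combinatorial
`w`-Riedtmann configuration `S` and an arc `s ∈ S` with exactly `l` replacements. -/
theorem stmt_3 (w : ℤ) (hw : w ≤ -1) (l : ℤ) (hl0 : 0 ≤ l) (hl : l ≤ -w - 1) :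
    ∃ (S : Set Arc) (s : Arc), IsRiedtmann w S ∧ s ∈ S ∧
      {t : Arc | IsReplacement w S s t}.encard = (l.toNat : ℕ∞) := by
  obtain ⟨m, rfl, hm⟩ : ∃ m : ℤ, w = -m ∧ 1 ≤ m := ⟨-w, by ring, by omega⟩
  have hlm : l ≤ m - 1 := by omega
  refine ⟨Gset m l 0, ((0:ℤ) + m, (0:ℤ)), ⟨hom_G m l 0 hm hl0 hlm le_rfl hl0, ?_⟩,
    ⟨0, Or.inr (Or.inl rfl), rfl⟩, ?_⟩
  · have := outer_bound m l 0 hm hl0 le_rfl hl0 (m - 1) hlm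
    convert this using 2
    omega
  · -- compute the replacement set
    have hsne : ∀ x ∈ Bset m l 0, x ≠ 0 → ((x + m, x) : Arc) ≠ ((0:ℤ) + m, (0:ℤ)) := by
      intro x hx hx0 h
      exact hx0 (by simpa using congrArg Prod.snd h)
    have hTv : ∀ v : ℤ, 1 ≤ v → v ≤ l →
        (Gset m l 0 \ {((0:ℤ) + m, (0:ℤ))}) ∪ {((v + m, v) : Arc)} = Gset m l v := by
      intro v hv1 hvl
      ext a
      simp only [Set.mem_union, Set.mem_diff, Set.mem_singleton_iff]
      constructor
      · rintro (⟨⟨x, hx, rfl⟩, hne⟩ | rfl)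
        · rcases hx with ⟨k, hk, rfl⟩ | rfl | ⟨k, hk, rfl⟩
          · exact ⟨_, Or.inl ⟨k, hk, rfl⟩, rfl⟩
          · exact absurd rfl hne
          · exact ⟨_, Or.inr (Or.inr ⟨k, hk, rfl⟩), rfl⟩
        · exact ⟨v, Or.inr (Or.inl rfl), rfl⟩
      · rintro ⟨x, hx, rfl⟩
        rcases hx with ⟨k, hk, rfl⟩ | rfl | ⟨k, hk, rfl⟩
        · refine Or.inl ⟨⟨_, Or.inl ⟨k, hk, rfl⟩, rfl⟩, hsne _ (Or.inl ⟨k, hk, rfl⟩) ?_⟩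
          have := keyC m k 0 hm (by omega)
          nlinarith [this]
        · exact Or.inr rfl
        · refine Or.inl ⟨⟨_, Or.inr (Or.inr ⟨k, hk, rfl⟩), rfl⟩,
            hsne _ (Or.inr (Or.inr ⟨k, hk, rfl⟩)) ?_⟩
          have := keyC m 0 k hm (by omega)
          nlinarith [this]
    have hR : {t : Arc | IsReplacement (-m) (Gset m l 0) ((0:ℤ) + m, (0:ℤ)) t} =
        (fun v : ℤ => ((v + m, v) : Arc)) '' Set.Icc 1 l := by
      ext t
      constructor
      · rintro ⟨hne, hHom⟩
        obtain ⟨t1, t2⟩ := t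
        obtain ⟨hadm, hcross, hinner, houter⟩ := hHom
        set T := (Gset m l 0 \ {((0:ℤ) + m, (0:ℤ))}) ∪ {((t1, t2) : Arc)} with hTdef
        have htT : ((t1, t2) : Arc) ∈ T := Or.inr rfl
        obtain ⟨hlen, c, hc⟩ := hadm ((t1, t2) : Arc) htT
        simp only at hlen hc
        by_cases htS : ((t1, t2) : Arc) ∈ Gset m l 0 \ {((0:ℤ) + m, (0:ℤ))}
        · exfalso
          have harc : ∀ a ∈ T, ∃ x ∈ Bset m l 0, x ≠ 0 ∧ a = (x + m, x) := by
            rintro a (⟨⟨x, hx, rfl⟩, hne'⟩ | rfl)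
            · refine ⟨x, hx, ?_, rfl⟩
              rintro rfl; exact hne' rfl
            · obtain ⟨⟨x, hx, hxe⟩, hne'⟩ := htS
              refine ⟨x, hx, ?_, hxe⟩
              rintro rfl; rw [hxe] at hne'; exact hne' rfl
          have hxfact : ∀ x ∈ Bset m l 0, x ≠ 0 → x + m ≤ -1 ∨ m + 1 ≤ x := by
            rintro x (⟨k, hk, rfl⟩ | rfl | ⟨k, hk, rfl⟩) hx0
            · exact Or.inl (by nlinarith [keyC m k 0 hm (by omega)])
            · exact absurd rfl hx0
            · exact Or.inr (by nlinarith [keyC m 0 k hm (by omega)])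
          have hsub : Set.Icc (0:ℤ) m ⊆ {p | OuterIsolated T p} := by
            rintro p ⟨hp0, hpm⟩
            constructor
            · rintro a ha hp
              obtain ⟨x, hx, hx0, rfl⟩ := harc a ha
              have := hxfact x hx hx0
              simp only [IsEndpoint] at hp
              omega
            · rintro a ha hov
              obtain ⟨x, hx, hx0, rfl⟩ := harc a ha
              have := hxfact x hx hx0
              simp only [OverarcOfVertex] at hov
              omega
          have hb := Set.encard_mono hsub
          have he : (Set.Icc (0:ℤ) m).encard = ((m+1).toNat : ℕ∞) := by
            rw [← Finset.coe_Icc, Set.encard_coe_eq_coe_finsetCard, Int.card_Icc]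
            congr 1; omega
          rw [he] at hb
          have hfin := le_trans hb houter
          rw [Nat.cast_le] at hfin
          omega
        · have hncross : ∀ x ∈ Bset m l 0, x ≠ 0 → ¬ Cross ((t1, t2) : Arc) ((x+m, x) : Arc) := by
            intro x hx hx0
            refine hcross _ htT (x+m, x) (Or.inl ⟨⟨x, hx, rfl⟩, hsne x hx hx0⟩) ?_
            intro h
            rw [h] at htS
            exact htS ⟨⟨x, hx, rfl⟩, hsne x hx hx0⟩
          have h2 : 0 ≤ t2 := by
            by_contra h; push_neg at h
            obtain ⟨x, hx, hx1, hx2, hx3⟩ := cell_left m l 0 t2 hm (by omega)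
            refine hncross x hx (by omega) ?_
            simp only [Cross, SharesEndpoint, StrictCross]
            omega
          have h1 : t1 ≤ m + l := by
            by_contra h; push_neg at h
            obtain ⟨x, hx, hx1, hx2, hx3⟩ := cell_right m l 0 t1 hm hl0 (by omega)
            refine hncross x hx (by omega) ?_
            simp only [Cross, SharesEndpoint, StrictCross]
            omega
          have hlen2 : t1 - t2 = m := by
            rcases le_or_gt c 0 with hcc | hcc
            · exfalso
              have : 0 ≤ (-m-1)*c := by nlinarith [mul_nonneg (show (0:ℤ) ≤ m+1 by omega) (show (0:ℤ) ≤ -c by omega)]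
              omega
            rcases le_or_gt 2 c with hcc2 | hcc2
            · exfalso
              have : (-m-1)*c ≤ (-m-1)*2 := mul_le_mul_of_nonpos_left hcc2 (by omega)
              nlinarith [this]
            · have hc1 : c = 1 := by omega
              rw [hc1] at hc
              nlinarith [hc]
          have h0 : t2 ≠ 0 := by
            rintro rfl
            exact hne (Prod.ext_iff.mpr ⟨by simp only; omega, rfl⟩)
          exact ⟨t2, ⟨by omega, by omega⟩, Prod.ext_iff.mpr ⟨by simp only; omega, rfl⟩⟩
      · rintro ⟨v, ⟨hv1, hvl⟩, rfl⟩
        refine ⟨?_, ?_⟩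
        · intro h
          have := congrArg Prod.snd h
          simp only at this
          omega
        · rw [hTv v hv1 hvl]
          exact hom_G m l v hm hl0 hlm (by omega) hvl
    rw [hR, Function.Injective.encard_image (fun a b h => by simpa using congrArg Prod.snd h),
      ← Finset.coe_Icc, Set.encard_coe_eq_coe_finsetCard, Int.card_Icc]
    congr 1; omega
end

section
/- Let w ≤ -1 be an integer, let S be a combinatorial w-Riedtmann configuration, and let s ∈ S. Then s has at most |w| - 1 replacements. -/
open Set

section Basics

lemma arc_lt {w : ℤ} (hw : w ≤ -1) {a : Arc} (h : IsAdmissible w a) : a.2 < a.1 := by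
  have := h.1; omega

lemma cross_symm' {a b : Arc} (h : ¬ Cross a b) : ¬ Cross b a := by
  unfold Cross SharesEndpoint StrictCross at *; omega

lemma overarc_trans {a b c : Arc} (h1 : OverarcOf a b) (h2 : OverarcOf b c) : OverarcOf a c := by
  unfold OverarcOf at *; omega

lemma overarc_asymm {a b : Arc} (h1 : OverarcOf a b) : ¬ OverarcOf b a := by
  unfold OverarcOf at *; omega

lemma overarc_irrefl (a : Arc) : ¬ OverarcOf a a := by
  unfold OverarcOf; omega

lemma overarc_of_endpoint {t e : Arc} (hnc : ¬ Cross t e) (ht : t.2 < t.1)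
    {p : ℤ} (hp : p = t.1 ∨ p = t.2) (h1 : e.2 < p) (h2 : p < e.1) : OverarcOf e t := by
  unfold Cross SharesEndpoint StrictCross at hnc
  unfold OverarcOf
  omega

lemma nested {c e : Arc} (hnc : ¬ Cross c e) (hc : c.2 < c.1) (he : e.2 < e.1)
    {p : ℤ} (h1 : e.2 < p) (h2 : p < e.1) (h3 : c.2 < p) (h4 : p < c.1) :
    OverarcOf e c ∨ OverarcOf c e := by
  unfold Cross SharesEndpoint StrictCross at hnc
  unfold OverarcOf
  omega

lemma not_endpoint_of_noncross {a e : Arc} (h : ¬ Cross a e) {p : ℤ}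
    (hp : p = a.1 ∨ p = a.2) : ¬ IsEndpoint p e := by
  unfold Cross SharesEndpoint StrictCross at h
  unfold IsEndpoint
  omega

lemma exists_min_overarc {X : Set Arc} {a : Arc}
    (h : ∃ e ∈ X, OverarcOf e a) :
    ∃ c ∈ X, OverarcOf c a ∧ ∀ e ∈ X, OverarcOf e a → ¬ OverarcOf c e := by
  obtain ⟨e0, he0, ho0⟩ := h
  have hne : {k : ℕ | ∃ e ∈ X, OverarcOf e a ∧ (e.1 - e.2).toNat = k}.Nonempty :=
    ⟨_, e0, he0, ho0, rfl⟩
  obtain ⟨c, hc, hoc, hk⟩ := Nat.sInf_mem hne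
  refine ⟨c, hc, hoc, ?_⟩
  intro e he hoe hce
  have hmem : (e.1 - e.2).toNat ∈ {k : ℕ | ∃ e ∈ X, OverarcOf e a ∧ (e.1 - e.2).toNat = k} :=
    ⟨e, he, hoe, rfl⟩
  have h2 := Nat.sInf_le hmem
  rw [← hk] at h2
  unfold OverarcOf at hoc hoe hce
  omega

lemma encard_contra {n m : ℕ} {P Q : Set ℤ} (hsub : P ⊆ Q)
    (hP : (m : ℕ∞) ≤ P.encard) (hQ : Q.encard ≤ (n : ℕ∞)) (hnm : n < m) : False := by
  have h := (hP.trans (Set.encard_mono hsub)).trans hQ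
  rw [Nat.cast_le] at h
  omega

lemma encard_insert2 {P : Set ℤ} {n : ℕ} {x y : ℤ} (hx : x ∉ insert y P) (hy : y ∉ P)
    (hP : P.encard = n) : ((n + 2 : ℕ) : ℕ∞) ≤ (insert x (insert y P)).encard := by
  rw [Set.encard_insert_of_notMem hx, Set.encard_insert_of_notMem hy, hP]
  push_cast
  exact le_of_eq (by ring)

lemma encard_insert1 {P : Set ℤ} {n : ℕ} {x : ℤ} (hx : x ∉ P)
    (hP : P.encard = n) : ((n + 1 : ℕ) : ℕ∞) ≤ (insert x P).encard := by
  rw [Set.encard_insert_of_notMem hx, hP]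
  push_cast
  exact le_of_eq rfl

end Basics

section Main

variable {w : ℤ} {S : Set Arc} {s t : Arc}

lemma notHomDel (hw : w ≤ -1) (hS : IsRiedtmann w S) (hs : s ∈ S) :
    ¬ IsHomConfig w (S \ {s}) := by
  intro hd
  have hH := hS.1
  have hadm := hH.1
  have hnc : ∀ a ∈ S, ∀ b ∈ S, a ≠ b → ¬ Cross a b := hH.2.1
  have hslt : s.2 < s.1 := arc_lt hw (hadm s hs)
  set n : ℕ := (-w - 1).toNat with hn
  have hnw : ((-w - 1).toNat : ℕ∞) = (n : ℕ∞) := rfl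
  -- s.1, s.2 are isolated in S \ {s}
  have hiso : ∀ p : ℤ, (p = s.1 ∨ p = s.2) → Isolated (S \ {s}) p := by
    intro p hp e he
    have hes : s ≠ e := fun h => he.2 (by simp [← h])
    exact not_endpoint_of_noncross (hnc s hs e he.1 hes) hp
  -- any arc of S other than s covering an endpoint of s is an overarc of s
  have hcov : ∀ e ∈ S, e ≠ s → ∀ p : ℤ, (p = s.1 ∨ p = s.2) → e.2 < p → p < e.1 →
      OverarcOf e s := by
    intro e he hne p hp h1 h2
    exact overarc_of_endpoint (hnc s hs e he (Ne.symm hne)) hslt hp h1 h2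
  by_cases hb : ∃ e ∈ S, OverarcOf e s
  · obtain ⟨b, hbS, hbo, hbmin⟩ := exists_min_overarc hb
    obtain ⟨hb2, hb23, hb1⟩ := hbo
    have hbne : b ≠ s := by intro h; rw [h] at hb2; omega
    have hbC : b ∈ S \ {s} := ⟨hbS, by simpa using hbne⟩
    have hsub : insert s.1 (insert s.2 {p | InnerIsolatedOf S b p})
        ⊆ {p | InnerIsolatedOf (S \ {s}) b p} := by
      intro p hp
      rcases Set.mem_insert_iff.1 hp with rfl | hp
      · refine ⟨hiso _ (Or.inl rfl), ⟨by omega, by omega⟩, ?_⟩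
        intro c hc hbc hcv
        exact hbmin c hc.1 (hcov c hc.1 (by simpa using hc.2) s.1 (Or.inl rfl) hcv.1 hcv.2) hbc
      rcases Set.mem_insert_iff.1 hp with rfl | hp
      · refine ⟨hiso _ (Or.inr rfl), ⟨by omega, by omega⟩, ?_⟩
        intro c hc hbc hcv
        exact hbmin c hc.1 (hcov c hc.1 (by simpa using hc.2) s.2 (Or.inr rfl) hcv.1 hcv.2) hbc
      · obtain ⟨h1, h2, h3⟩ := hp
        exact ⟨fun e he => h1 e he.1, h2, fun c hc => h3 c hc.1⟩
    have hx : s.1 ∉ insert s.2 {p | InnerIsolatedOf S b p} := by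
      intro h
      rcases Set.mem_insert_iff.1 h with h | h
      · omega
      · exact h.1 s hs (Or.inl rfl)
    have hy : s.2 ∉ {p | InnerIsolatedOf S b p} := fun h => h.1 s hs (Or.inr rfl)
    have hPn : {p | InnerIsolatedOf S b p}.encard = (n : ℕ∞) := hH.2.2.1 b hbS
    have hQn : {p | InnerIsolatedOf (S \ {s}) b p}.encard ≤ (n : ℕ∞) :=
      le_of_eq (hd.2.2.1 b hbC)
    exact encard_contra hsub (encard_insert2 hx hy hPn) hQn (by omega)
  · push_neg at hb
    have hsub : insert s.1 (insert s.2 {p | InnerIsolatedOf S s p})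
        ⊆ {p | OuterIsolated (S \ {s}) p} := by
      intro p hp
      rcases Set.mem_insert_iff.1 hp with rfl | hp
      · exact ⟨hiso _ (Or.inl rfl), fun e he hov =>
          hb e he.1 (hcov e he.1 (by simpa using he.2) s.1 (Or.inl rfl) hov.1 hov.2)⟩
      rcases Set.mem_insert_iff.1 hp with rfl | hp
      · exact ⟨hiso _ (Or.inr rfl), fun e he hov =>
          hb e he.1 (hcov e he.1 (by simpa using he.2) s.2 (Or.inr rfl) hov.1 hov.2)⟩
      · obtain ⟨h1, h2, h3⟩ := hp
        refine ⟨fun e he => h1 e he.1, ?_⟩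
        intro e he hov
        have hne : e ≠ s := by simpa using he.2
        have helt : e.2 < e.1 := arc_lt hw (hadm e he.1)
        rcases nested (hnc e he.1 s hs hne) helt hslt h2.1 h2.2 hov.1 hov.2 with h | h
        · exact h3 e he.1 h hov
        · exact hb e he.1 h
    have hx : s.1 ∉ insert s.2 {p | InnerIsolatedOf S s p} := by
      intro h
      rcases Set.mem_insert_iff.1 h with h | h
      · omega
      · exact h.1 s hs (Or.inl rfl)
    have hy : s.2 ∉ {p | InnerIsolatedOf S s p} := fun h => h.1 s hs (Or.inr rfl)
    have hPn : {p | InnerIsolatedOf S s p}.encard = (n : ℕ∞) := hH.2.2.1 s hs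
    have hQn : {p | OuterIsolated (S \ {s}) p}.encard ≤ ((n + 1 : ℕ) : ℕ∞) := by
      have h1 := hd.2.2.2
      have : (-w).toNat = n + 1 := by omega
      rwa [this] at h1
    exact encard_contra hsub (encard_insert2 hx hy hPn) hQn (by omega)

lemma t_not_in (hw : w ≤ -1) (hS : IsRiedtmann w S) (hs : s ∈ S)
    (hrep : IsReplacement w S s t) : t ∉ S \ {s} := by
  intro h
  have he : (S \ {s}) ∪ {t} = S \ {s} := by
    rw [Set.union_singleton, Set.insert_eq_self.2 h]
  exact notHomDel hw hS hs (he ▸ hrep.2)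

end Main

section Rigid

variable {w : ℤ} {X : Set Arc} {t t' : Arc}

lemma rigid_aux_tgt (hw : w ≤ -1) (ht : t ∉ X) (ht' : t' ∉ X)
    (h1 : IsHomConfig w (X ∪ {t})) (h2 : IsHomConfig w (X ∪ {t'}))
    (he : t.2 = t'.2) (hlt : t.1 < t'.1) : False := by
  have htC : t ∈ X ∪ {t} := Set.mem_union_right _ rfl
  have ht'C : t' ∈ X ∪ {t'} := Set.mem_union_right _ rfl
  have htl : t.2 < t.1 := arc_lt hw (h1.1 t htC)
  have ht'l : t'.2 < t'.1 := arc_lt hw (h2.1 t' ht'C)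
  have hnc1 : ∀ e ∈ X, ¬ Cross t e := fun e heX =>
    h1.2.1 t htC e (Set.mem_union_left _ heX) (fun h => ht (h ▸ heX))
  set n : ℕ := (-w - 1).toNat with hn
  have hsub : insert t.1 {p | InnerIsolatedOf (X ∪ {t}) t p}
      ⊆ {p | InnerIsolatedOf (X ∪ {t'}) t' p} := by
    intro p hp
    rcases Set.mem_insert_iff.1 hp with rfl | hp
    · refine ⟨?_, ⟨by omega, hlt⟩, ?_⟩
      · intro e heC
        rcases heC with heX | rfl
        · exact not_endpoint_of_noncross (hnc1 e heX) (Or.inl rfl)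
        · intro hend
          rcases hend with h | h <;> omega
      · intro c hcC hoc hcv
        obtain ⟨hoc1, hoc2, hoc3⟩ := hoc
        obtain ⟨hcv1, hcv2⟩ := hcv
        rcases hcC with hcX | rfl
        · have := overarc_of_endpoint (hnc1 c hcX) htl (Or.inl rfl) hcv1 hcv2
          obtain ⟨ha, hb', hc'⟩ := this
          omega
        · omega
    · obtain ⟨hiso, hov, hfor⟩ := hp
      obtain ⟨hov1, hov2⟩ := hov
      refine ⟨?_, ⟨by omega, by omega⟩, ?_⟩
      · intro e heC
        rcases heC with heX | rfl
        · exact hiso e (Set.mem_union_left _ heX)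
        · intro hend
          rcases hend with h | h <;> omega
      · intro c hcC hoc hcv
        obtain ⟨hoc1, hoc2, hoc3⟩ := hoc
        obtain ⟨hcv1, hcv2⟩ := hcv
        rcases hcC with hcX | rfl
        · have hclt : c.2 < c.1 := arc_lt hw (h1.1 c (Set.mem_union_left _ hcX))
          rcases nested (cross_symm' (hnc1 c hcX)) hclt htl hov1 hov2 hcv1 hcv2 with h | h
          · exact hfor c (Set.mem_union_left _ hcX) h ⟨hcv1, hcv2⟩
          · obtain ⟨ha, hb', hc'⟩ := h
            omega
        · omega
  have hx : t.1 ∉ {p | InnerIsolatedOf (X ∪ {t}) t p} := fun h => lt_irrefl _ h.2.1.2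
  have hPn : {p | InnerIsolatedOf (X ∪ {t}) t p}.encard = (n : ℕ∞) := h1.2.2.1 t htC
  have hQn : {p | InnerIsolatedOf (X ∪ {t'}) t' p}.encard ≤ (n : ℕ∞) :=
    le_of_eq (h2.2.2.1 t' ht'C)
  exact encard_contra hsub (encard_insert1 hx hPn) hQn (by omega)

lemma rigid_tgt (hw : w ≤ -1) (ht : t ∉ X) (ht' : t' ∉ X)
    (h1 : IsHomConfig w (X ∪ {t})) (h2 : IsHomConfig w (X ∪ {t'}))
    (he : t.2 = t'.2) : t = t' := by
  rcases lt_trichotomy t.1 t'.1 with h | h | h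
  · exact (rigid_aux_tgt hw ht ht' h1 h2 he h).elim
  · exact Prod.ext h he
  · exact (rigid_aux_tgt hw ht' ht h2 h1 he.symm h).elim

lemma rigid_aux_src (hw : w ≤ -1) (ht : t ∉ X) (ht' : t' ∉ X)
    (h1 : IsHomConfig w (X ∪ {t})) (h2 : IsHomConfig w (X ∪ {t'}))
    (he : t.1 = t'.1) (hlt : t.2 < t'.2) : False := by
  have htC : t ∈ X ∪ {t} := Set.mem_union_right _ rfl
  have ht'C : t' ∈ X ∪ {t'} := Set.mem_union_right _ rfl
  have htl : t.2 < t.1 := arc_lt hw (h1.1 t htC)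
  have ht'l : t'.2 < t'.1 := arc_lt hw (h2.1 t' ht'C)
  have hnc2 : ∀ e ∈ X, ¬ Cross t' e := fun e heX =>
    h2.2.1 t' ht'C e (Set.mem_union_left _ heX) (fun h => ht' (h ▸ heX))
  set n : ℕ := (-w - 1).toNat with hn
  have hsub : insert t'.2 {p | InnerIsolatedOf (X ∪ {t'}) t' p}
      ⊆ {p | InnerIsolatedOf (X ∪ {t}) t p} := by
    intro p hp
    rcases Set.mem_insert_iff.1 hp with rfl | hp
    · refine ⟨?_, ⟨hlt, by omega⟩, ?_⟩
      · intro e heC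
        rcases heC with heX | rfl
        · exact not_endpoint_of_noncross (hnc2 e heX) (Or.inr rfl)
        · intro hend
          rcases hend with h | h <;> omega
      · intro c hcC hoc hcv
        obtain ⟨hoc1, hoc2, hoc3⟩ := hoc
        obtain ⟨hcv1, hcv2⟩ := hcv
        rcases hcC with hcX | rfl
        · have := overarc_of_endpoint (hnc2 c hcX) ht'l (Or.inr rfl) hcv1 hcv2
          obtain ⟨ha, hb', hc'⟩ := this
          omega
        · omega
    · obtain ⟨hiso, hov, hfor⟩ := hp
      obtain ⟨hov1, hov2⟩ := hov
      refine ⟨?_, ⟨by omega, by omega⟩, ?_⟩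
      · intro e heC
        rcases heC with heX | rfl
        · exact hiso e (Set.mem_union_left _ heX)
        · intro hend
          rcases hend with h | h <;> omega
      · intro c hcC hoc hcv
        obtain ⟨hoc1, hoc2, hoc3⟩ := hoc
        obtain ⟨hcv1, hcv2⟩ := hcv
        rcases hcC with hcX | rfl
        · have hclt : c.2 < c.1 := arc_lt hw (h2.1 c (Set.mem_union_left _ hcX))
          rcases nested (cross_symm' (hnc2 c hcX)) hclt ht'l hov1 hov2 hcv1 hcv2 with h | h
          · exact hfor c (Set.mem_union_left _ hcX) h ⟨hcv1, hcv2⟩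
          · obtain ⟨ha, hb', hc'⟩ := h
            omega
        · omega
  have hx : t'.2 ∉ {p | InnerIsolatedOf (X ∪ {t'}) t' p} := fun h => lt_irrefl _ h.2.1.1
  have hPn : {p | InnerIsolatedOf (X ∪ {t'}) t' p}.encard = (n : ℕ∞) := h2.2.2.1 t' ht'C
  have hQn : {p | InnerIsolatedOf (X ∪ {t}) t p}.encard ≤ (n : ℕ∞) :=
    le_of_eq (h1.2.2.1 t htC)
  exact encard_contra hsub (encard_insert1 hx hPn) hQn (by omega)

lemma rigid_src (hw : w ≤ -1) (ht : t ∉ X) (ht' : t' ∉ X)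
    (h1 : IsHomConfig w (X ∪ {t})) (h2 : IsHomConfig w (X ∪ {t'}))
    (he : t.1 = t'.1) : t = t' := by
  rcases lt_trichotomy t.2 t'.2 with h | h | h
  · exact (rigid_aux_src hw ht ht' h1 h2 he h).elim
  · exact Prod.ext he h
  · exact (rigid_aux_src hw ht' ht h2 h1 he.symm h).elim

end Rigid

section Structure

variable {w : ℤ} {S : Set Arc} {s t : Arc}

/-- Every arc of `S \ {s}` which is an overarc of the replacement `t` is an overarc of `s`. -/
lemma over_t_over_s (hw : w ≤ -1) (hS : IsRiedtmann w S) (hs : s ∈ S)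
    (hrep : IsReplacement w S s t) :
    ∀ e ∈ S \ {s}, OverarcOf e t → OverarcOf e s := by
  intro e heS' heot
  have hC := hrep.2
  have htX : t ∉ S \ {s} := t_not_in hw hS hs hrep
  have htC : t ∈ (S \ {s}) ∪ {t} := Set.mem_union_right _ rfl
  have htl : t.2 < t.1 := arc_lt hw (hC.1 t htC)
  have hsl : s.2 < s.1 := arc_lt hw (hS.1.1 s hs)
  have hncS : ∀ a ∈ S, ∀ b ∈ S, a ≠ b → ¬ Cross a b := hS.1.2.1
  have hnct : ∀ e ∈ S \ {s}, ¬ Cross t e := fun e heX =>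
    hC.2.1 t htC e (Set.mem_union_left _ heX) (fun h => htX (h ▸ heX))
  set n : ℕ := (-w - 1).toNat with hn
  obtain ⟨c, hcC, hcot, hcmin⟩ :=
    exists_min_overarc ⟨e, Set.mem_union_left _ heS', heot⟩
  have hcS' : c ∈ S \ {s} := by
    rcases hcC with h | h
    · exact h
    · exact absurd (show OverarcOf t t from (show c = t from h) ▸ hcot) (overarc_irrefl t)
  have hcl : c.2 < c.1 := arc_lt hw (hS.1.1 c hcS'.1)
  have hcs : c ≠ s := by simpa using hcS'.2
  -- the core argument: the minimal overarc of t must be an overarc of s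
  have hcos : OverarcOf c s := by
    by_contra hno
    have hco1 := hcot.1
    have hco2 := hcot.2.1
    have hco3 := hcot.2.2
    -- endpoints of s are not in the interior of c
    have hsj : ∀ p : ℤ, (p = s.1 ∨ p = s.2) → ¬ (c.2 < p ∧ p < c.1) := by
      intro p hp hin
      exact hno (overarc_of_endpoint (hncS s hs c hcS'.1 (Ne.symm hcs)) hsl hp hin.1 hin.2)
    have hsub : insert t.2 {p | InnerIsolatedOf ((S \ {s}) ∪ {t}) c p}
        ⊆ {p | InnerIsolatedOf S c p} := by
      intro p hp
      rcases Set.mem_insert_iff.1 hp with rfl | hp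
      · refine ⟨?_, ⟨hco1, by omega⟩, ?_⟩
        · intro e' he'
          rcases eq_or_ne e' s with rfl | hne
          · intro hend
            exact hsj t.2 (by rcases hend with h | h <;> omega) ⟨hco1, by omega⟩
          · exact not_endpoint_of_noncross (hnct e' ⟨he', by simpa using hne⟩) (Or.inr rfl)
        · intro e' he' hce' hcv
          rcases eq_or_ne e' s with rfl | hne
          · exact hno hce'
          · have he'X : e' ∈ S \ {s} := ⟨he', by simpa using hne⟩
            have := overarc_of_endpoint (hnct e' he'X) htl (Or.inr rfl) hcv.1 hcv.2
            exact hcmin e' (Set.mem_union_left _ he'X) this hce'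
      · obtain ⟨hiso, hov, hfor⟩ := hp
        refine ⟨?_, hov, ?_⟩
        · intro e' he'
          rcases eq_or_ne e' s with rfl | hne
          · intro hend
            exact hsj p (by rcases hend with h | h <;> omega) ⟨hov.1, hov.2⟩
          · exact hiso e' (Set.mem_union_left _ ⟨he', by simpa using hne⟩)
        · intro e' he' hce' hcv
          rcases eq_or_ne e' s with rfl | hne
          · exact hno hce'
          · exact hfor e' (Set.mem_union_left _ ⟨he', by simpa using hne⟩) hce' hcv
    have hx : t.2 ∉ {p | InnerIsolatedOf ((S \ {s}) ∪ {t}) c p} :=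
      fun h => h.1 t htC (Or.inr rfl)
    have hPn : {p | InnerIsolatedOf ((S \ {s}) ∪ {t}) c p}.encard = (n : ℕ∞) :=
      hC.2.2.1 c hcC
    have hQn : {p | InnerIsolatedOf S c p}.encard ≤ (n : ℕ∞) :=
      le_of_eq (hS.1.2.2.1 c hcS'.1)
    exact encard_contra hsub (encard_insert1 hx hPn) hQn (by omega)
  -- now conclude for e
  rcases eq_or_ne e c with rfl | hne
  · exact hcos
  · have hece : e ≠ c := hne
    have hel : e.2 < e.1 := arc_lt hw (hS.1.1 e heS'.1)
    have hnc_ec : ¬ Cross e c := hncS e heS'.1 c hcS'.1 hece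
    -- both cover t.1
    obtain ⟨hc1, hc2, hc3⟩ := hcot
    obtain ⟨he1, he2, he3⟩ := heot
    rcases nested hnc_ec hel hcl (by omega : c.2 < t.1) (by omega : t.1 < c.1)
      (by omega : e.2 < t.1) (by omega : t.1 < e.1) with h | h
    · exact absurd h (fun hh => hcmin e (Set.mem_union_left _ heS') ⟨he1, he2, he3⟩ hh)
    · exact overarc_trans h hcos

end Structure

section Structure2

variable {w : ℤ} {S : Set Arc} {s t : Arc}

/-- A replacement cannot lie strictly inside the span of `s`. -/
lemma not_inside (hw : w ≤ -1) (hS : IsRiedtmann w S) (hs : s ∈ S)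
    (hrep : IsReplacement w S s t) : ¬ (s.2 < t.2 ∧ t.1 < s.1) := by
  rintro ⟨hin1, hin2⟩
  have hC := hrep.2
  have htX : t ∉ S \ {s} := t_not_in hw hS hs hrep
  have htC : t ∈ (S \ {s}) ∪ {t} := Set.mem_union_right _ rfl
  have htl : t.2 < t.1 := arc_lt hw (hC.1 t htC)
  have hsl : s.2 < s.1 := arc_lt hw (hS.1.1 s hs)
  have hnct : ∀ e ∈ S \ {s}, ¬ Cross t e := fun e heX =>
    hC.2.1 t htC e (Set.mem_union_left _ heX) (fun h => htX (h ▸ heX))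
  have hD := over_t_over_s hw hS hs hrep
  set n : ℕ := (-w - 1).toNat with hn
  -- an arc of S strictly under s which covers an endpoint of t leads to a contradiction
  have hend_free : ∀ e ∈ S, OverarcOf s e → ∀ p : ℤ, (p = t.1 ∨ p = t.2) →
      ¬ OverarcOfVertex e p := by
    intro e he hse p hp hcv
    have hne : e ≠ s := fun h => overarc_irrefl s (h ▸ hse)
    have heX : e ∈ S \ {s} := ⟨he, by simpa using hne⟩
    have heot := overarc_of_endpoint (hnct e heX) htl hp hcv.1 hcv.2
    exact overarc_asymm hse (hD e heX heot)
  have hsub : insert t.1 (insert t.2 {p | InnerIsolatedOf ((S \ {s}) ∪ {t}) t p})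
      ⊆ {p | InnerIsolatedOf S s p} := by
    intro p hp
    rcases Set.mem_insert_iff.1 hp with rfl | hp
    · refine ⟨?_, ⟨by omega, by omega⟩, ?_⟩
      · intro e he
        rcases eq_or_ne e s with rfl | hne
        · intro hend; rcases hend with h | h <;> omega
        · exact not_endpoint_of_noncross (hnct e ⟨he, by simpa using hne⟩) (Or.inl rfl)
      · intro e he hse hcv
        exact hend_free e he hse t.1 (Or.inl rfl) hcv
    rcases Set.mem_insert_iff.1 hp with rfl | hp
    · refine ⟨?_, ⟨by omega, by omega⟩, ?_⟩
      · intro e he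
        rcases eq_or_ne e s with rfl | hne
        · intro hend; rcases hend with h | h <;> omega
        · exact not_endpoint_of_noncross (hnct e ⟨he, by simpa using hne⟩) (Or.inr rfl)
      · intro e he hse hcv
        exact hend_free e he hse t.2 (Or.inr rfl) hcv
    · obtain ⟨hiso, hov, hfor⟩ := hp
      obtain ⟨hov1, hov2⟩ := hov
      refine ⟨?_, ⟨by omega, by omega⟩, ?_⟩
      · intro e he
        rcases eq_or_ne e s with rfl | hne
        · intro hend; rcases hend with h | h <;> omega
        · exact hiso e (Set.mem_union_left _ ⟨he, by simpa using hne⟩)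
      · intro e he hse hcv
        have hne : e ≠ s := fun h => overarc_irrefl s (h ▸ hse)
        have heX : e ∈ S \ {s} := ⟨he, by simpa using hne⟩
        have hel : e.2 < e.1 := arc_lt hw (hS.1.1 e he)
        rcases nested (cross_symm' (hnct e heX)) hel htl hov1 hov2 hcv.1 hcv.2 with h | h
        · exact hfor e (Set.mem_union_left _ heX) h hcv
        · exact overarc_asymm hse (hD e heX h)
  have hx : t.1 ∉ insert t.2 {p | InnerIsolatedOf ((S \ {s}) ∪ {t}) t p} := by
    intro h
    rcases Set.mem_insert_iff.1 h with h | h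
    · omega
    · exact lt_irrefl _ h.2.1.2
  have hy : t.2 ∉ {p | InnerIsolatedOf ((S \ {s}) ∪ {t}) t p} :=
    fun h => lt_irrefl _ h.2.1.1
  have hPn : {p | InnerIsolatedOf ((S \ {s}) ∪ {t}) t p}.encard = (n : ℕ∞) :=
    hC.2.2.1 t htC
  have hQn : {p | InnerIsolatedOf S s p}.encard ≤ (n : ℕ∞) :=
    le_of_eq (hS.1.2.2.1 s hs)
  exact encard_contra hsub (encard_insert2 hx hy hPn) hQn (by omega)

/-- If `s` has a minimal overarc `b` in `S`, then any replacement lies under `b`. -/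
lemma under_b (hw : w ≤ -1) (hS : IsRiedtmann w S) (hs : s ∈ S)
    (hrep : IsReplacement w S s t) {b : Arc} (hbS : b ∈ S) (hbo : OverarcOf b s)
    (hbmin : ∀ e ∈ S, OverarcOf e s → ¬ OverarcOf b e) : OverarcOf b t := by
  by_contra hno
  have hC := hrep.2
  have htX : t ∉ S \ {s} := t_not_in hw hS hs hrep
  have htC : t ∈ (S \ {s}) ∪ {t} := Set.mem_union_right _ rfl
  have htl : t.2 < t.1 := arc_lt hw (hC.1 t htC)
  have hsl : s.2 < s.1 := arc_lt hw (hS.1.1 s hs)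
  have hncS : ∀ a ∈ S, ∀ b ∈ S, a ≠ b → ¬ Cross a b := hS.1.2.1
  have hnct : ∀ e ∈ S \ {s}, ¬ Cross t e := fun e heX =>
    hC.2.1 t htC e (Set.mem_union_left _ heX) (fun h => htX (h ▸ heX))
  obtain ⟨hb2, hb23, hb1⟩ := hbo
  have hbs : b ≠ s := by intro h; rw [h] at hb2; omega
  have hbX : b ∈ S \ {s} := ⟨hbS, by simpa using hbs⟩
  have hbC : b ∈ (S \ {s}) ∪ {t} := Set.mem_union_left _ hbX
  have hbl : b.2 < b.1 := arc_lt hw (hS.1.1 b hbS)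
  set n : ℕ := (-w - 1).toNat with hn
  -- endpoints of t are not in the closed interval [s.2, s.1]... in fact not in int b
  have htnotin : ∀ p : ℤ, (p = t.1 ∨ p = t.2) → ¬ (b.2 < p ∧ p < b.1) := by
    intro p hp hin
    rcases eq_or_ne t b with rfl | hne
    · rcases hp with rfl | rfl <;> omega
    · exact hno (overarc_of_endpoint (hnct b hbX) htl hp hin.1 hin.2)
  -- arcs of S \ {s} under b cannot cover endpoints of s nor inner-isolated points of s
  have hcovs : ∀ e ∈ S \ {s}, OverarcOf b e → ∀ p : ℤ, (p = s.1 ∨ p = s.2) →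
      ¬ OverarcOfVertex e p := by
    intro e he hbe p hp hcv
    have hes : s ≠ e := fun h => he.2 h.symm
    exact hbmin e he.1
      (overarc_of_endpoint (hncS s hs e he.1 hes) hsl hp hcv.1 hcv.2) hbe
  have hsub : insert s.1 (insert s.2 {p | InnerIsolatedOf S s p})
      ⊆ {p | InnerIsolatedOf ((S \ {s}) ∪ {t}) b p} := by
    intro p hp
    have hiso_j : ∀ q : ℤ, (q = s.1 ∨ q = s.2) → Isolated ((S \ {s}) ∪ {t}) q := by
      intro q hq e he
      rcases he with heX | rfl
      · have hes : s ≠ e := fun h => heX.2 h.symm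
        exact not_endpoint_of_noncross (hncS s hs e heX.1 hes) hq
      · intro hend
        exact htnotin q (by rcases hend with h | h <;> omega) (by omega)
    rcases Set.mem_insert_iff.1 hp with rfl | hp
    · refine ⟨hiso_j s.1 (Or.inl rfl), ⟨by omega, by omega⟩, ?_⟩
      · intro e he hbe hcv
        rcases he with heX | rfl
        · exact hcovs e heX hbe s.1 (Or.inl rfl) hcv
        · exact hno hbe
    rcases Set.mem_insert_iff.1 hp with rfl | hp
    · refine ⟨hiso_j s.2 (Or.inr rfl), ⟨by omega, by omega⟩, ?_⟩
      · intro e he hbe hcv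
        rcases he with heX | rfl
        · exact hcovs e heX hbe s.2 (Or.inr rfl) hcv
        · exact hno hbe
    · obtain ⟨hiso, hov, hfor⟩ := hp
      obtain ⟨hov1, hov2⟩ := hov
      refine ⟨?_, ⟨by omega, by omega⟩, ?_⟩
      · intro e he
        rcases he with heX | rfl
        · exact hiso e heX.1
        · intro hend
          exact htnotin p (by rcases hend with h | h <;> omega) (by omega)
      · intro e he hbe hcv
        rcases he with heX | rfl
        · have hes : e ≠ s := by simpa using heX.2
          have hel : e.2 < e.1 := arc_lt hw (hS.1.1 e heX.1)
          rcases nested (hncS e heX.1 s hs hes) hel hsl hov1 hov2 hcv.1 hcv.2 with h | h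
          · exact hfor e heX.1 h hcv
          · exact hbmin e heX.1 h hbe
        · exact hno hbe
  have hx : s.1 ∉ insert s.2 {p | InnerIsolatedOf S s p} := by
    intro h
    rcases Set.mem_insert_iff.1 h with h | h
    · omega
    · exact h.1 s hs (Or.inl rfl)
  have hy : s.2 ∉ {p | InnerIsolatedOf S s p} := fun h => h.1 s hs (Or.inr rfl)
  have hPn : {p | InnerIsolatedOf S s p}.encard = (n : ℕ∞) := hS.1.2.2.1 s hs
  have hQn : {p | InnerIsolatedOf ((S \ {s}) ∪ {t}) b p}.encard ≤ (n : ℕ∞) :=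
    le_of_eq (hC.2.2.1 b hbC)
  exact encard_contra hsub (encard_insert2 hx hy hPn) hQn (by omega)

end Structure2

/-- in a combinatorial `w`-Riedtmann configuration (`w ≤ -1`), every arc has
at most `|w| - 1` replacements. -/
theorem stmt_4 (w : ℤ) (hw : w ≤ -1) (S : Set Arc) (hS : IsRiedtmann w S)
    (s : Arc) (hs : s ∈ S) :
    {t : Arc | IsReplacement w S s t}.encard ≤ ((-w - 1).toNat : ℕ∞) := by
  classical
  set n : ℕ := (-w - 1).toNat with hn
  have hSconf : IsHomConfig w S := hS.1
  have hsl : s.2 < s.1 := arc_lt hw (hSconf.1 s hs)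
  have hsX : s ∉ S \ {s} := fun h => h.2 rfl
  have hSeq : (S \ {s}) ∪ {s} = S := by
    rw [Set.union_singleton, Set.insert_diff_singleton, Set.insert_eq_self.2 hs]
  have hSconf' : IsHomConfig w ((S \ {s}) ∪ {s}) := by rw [hSeq]; exact hSconf
  set f : Arc → ℤ := fun a => if a.2 < s.2 then a.2 else a.1 with hf
  have hfacts : ∀ t : Arc, IsReplacement w S s t →
      (f t = t.2 ∧ t.2 < s.2) ∨ (f t = t.1 ∧ s.2 < t.2 ∧ s.1 < t.1) := by
    intro t hrep
    have htX := t_not_in hw hS hs hrep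
    have h2 : t.2 ≠ s.2 := fun h => hrep.1 (rigid_tgt hw htX hsX hrep.2 hSconf' h)
    have h1 : t.1 ≠ s.1 := fun h => hrep.1 (rigid_src hw htX hsX hrep.2 hSconf' h)
    have hni := not_inside hw hS hs hrep
    by_cases hlow : t.2 < s.2
    · exact Or.inl ⟨by simp [hf, hlow], hlow⟩
    · refine Or.inr ⟨by simp [hf, hlow], by omega, by omega⟩
  have hinj : Set.InjOn f {t : Arc | IsReplacement w S s t} := by
    intro a ha b hb hab
    have haR : IsReplacement w S s a := ha
    have hbR : IsReplacement w S s b := hb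
    have haX := t_not_in hw hS hs haR
    have hbX := t_not_in hw hS hs hbR
    rcases hfacts a haR with ⟨hfa, hla⟩ | ⟨hfa, hla1, hla2⟩ <;>
      rcases hfacts b hbR with ⟨hfb, hlb⟩ | ⟨hfb, hlb1, hlb2⟩
    · exact rigid_tgt hw haX hbX haR.2 hbR.2 (by rw [← hfa, ← hfb, hab])
    · have hbl : b.2 < b.1 := arc_lt hw (hbR.2.1 b (Set.mem_union_right _ rfl))
      rw [hfa, hfb] at hab
      omega
    · have hal : a.2 < a.1 := arc_lt hw (haR.2.1 a (Set.mem_union_right _ rfl))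
      rw [hfa, hfb] at hab
      omega
    · exact rigid_src hw haX hbX haR.2 hbR.2 (by rw [← hfa, ← hfb, hab])
  have hiso_ft : ∀ t : Arc, IsReplacement w S s t → Isolated S (f t) := by
    intro t hrep e he
    have htX := t_not_in hw hS hs hrep
    have htC : t ∈ (S \ {s}) ∪ {t} := Set.mem_union_right _ rfl
    have hnct : ∀ e ∈ S \ {s}, ¬ Cross t e := fun e heX =>
      hrep.2.2.1 t htC e (Set.mem_union_left _ heX) (fun h => htX (h ▸ heX))
    have htl : t.2 < t.1 := arc_lt hw (hrep.2.1 t htC)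
    rcases eq_or_ne e s with rfl | hne
    · intro hend
      rcases hfacts t hrep with ⟨hfv, hlt⟩ | ⟨hfv, hlt1, hlt2⟩ <;>
        rw [hfv] at hend <;> rcases hend with h | h <;> omega
    · have hend : f t = t.1 ∨ f t = t.2 := by
        rcases hfacts t hrep with ⟨hfv, _⟩ | ⟨hfv, _, _⟩
        · exact Or.inr hfv
        · exact Or.inl hfv
      exact not_endpoint_of_noncross (hnct e ⟨he, fun h => hne h⟩) hend
  have hncovs : ∀ t : Arc, IsReplacement w S s t → ¬ OverarcOfVertex s (f t) := by
    intro t hrep hcv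
    rcases hfacts t hrep with ⟨hfv, hlt⟩ | ⟨hfv, hlt1, hlt2⟩ <;>
      rw [hfv] at hcv <;> obtain ⟨h1, h2⟩ := hcv <;> omega
  have hcov_over : ∀ t : Arc, IsReplacement w S s t → ∀ e ∈ S \ {s},
      OverarcOfVertex e (f t) → OverarcOf e s := by
    intro t hrep e heX hcv
    have htX := t_not_in hw hS hs hrep
    have htC : t ∈ (S \ {s}) ∪ {t} := Set.mem_union_right _ rfl
    have hnct : ¬ Cross t e :=
      hrep.2.2.1 t htC e (Set.mem_union_left _ heX) (fun h => htX (h ▸ heX))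
    have htl : t.2 < t.1 := arc_lt hw (hrep.2.1 t htC)
    have hend : f t = t.1 ∨ f t = t.2 := by
      rcases hfacts t hrep with ⟨hfv, _⟩ | ⟨hfv, _, _⟩
      · exact Or.inr hfv
      · exact Or.inl hfv
    have heot : OverarcOf e t := by
      rcases hend with h | h <;> rw [h] at hcv <;>
        exact overarc_of_endpoint hnct htl (by omega) hcv.1 hcv.2
    exact over_t_over_s hw hS hs hrep e heX heot
  by_cases hex : ∃ e ∈ S, OverarcOf e s
  · obtain ⟨b, hbS, hbo, hbmin⟩ := exists_min_overarc hex
    have hmaps : Set.MapsTo f {t : Arc | IsReplacement w S s t}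
        {p | InnerIsolatedOf S b p} := by
      intro t ht
      have hrep : IsReplacement w S s t := ht
      have hub := under_b hw hS hs hrep hbS hbo hbmin
      obtain ⟨hu1, hu2, hu3⟩ := hub
      refine ⟨hiso_ft t hrep, ?_, ?_⟩
      · rcases hfacts t hrep with ⟨hfv, _⟩ | ⟨hfv, _, _⟩ <;> rw [hfv] <;>
          exact ⟨by omega, by omega⟩
      · intro e he hbe hcv
        rcases eq_or_ne e s with rfl | hne
        · exact hncovs t hrep hcv
        · exact hbmin e he (hcov_over t hrep e ⟨he, fun h => hne h⟩ hcv) hbe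
    calc {t : Arc | IsReplacement w S s t}.encard
        = (f '' {t : Arc | IsReplacement w S s t}).encard := (hinj.encard_image).symm
      _ ≤ {p | InnerIsolatedOf S b p}.encard := Set.encard_mono hmaps.image_subset
      _ ≤ (n : ℕ∞) := le_of_eq (hSconf.2.2.1 b hbS)
  · push_neg at hex
    have hmaps : Set.MapsTo f {t : Arc | IsReplacement w S s t}
        {p | OuterIsolated S p} := by
      intro t ht
      have hrep : IsReplacement w S s t := ht
      refine ⟨hiso_ft t hrep, ?_⟩
      intro e he hcv
      rcases eq_or_ne e s with rfl | hne
      · exact hncovs t hrep hcv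
      · exact hex e he (hcov_over t hrep e ⟨he, fun h => hne h⟩ hcv)
    calc {t : Arc | IsReplacement w S s t}.encard
        = (f '' {t : Arc | IsReplacement w S s t}).encard := (hinj.encard_image).symm
      _ ≤ {p | OuterIsolated S p}.encard := Set.encard_mono hmaps.image_subset
      _ ≤ (n : ℕ∞) := hS.2
end
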